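/- arXiv:2108.08370 — 9 statements merged into one kernel-verified Lean document; each statement's English description precedes it below -/
import Mathlib

section
/- Fix n and a,b ∈ [n], and let r satisfy 0 ≤ r < min(a,b) and a+b−r ≤ n. Define π ∈ S_n as the block permutation matrix diag-arranged with blocks (1_r, 0, 0, 0; 0, 0, 1_{a−r}, 0; 0, 1_{b−r}, 0, 0; 0, 0, 0, 1_{n−a−b+r}). Then the essential set of π is {(a,b)} and rk_π(a,b) = r. -/
/-- The rank function of a permutation: `rk u a b = #{i ≤ a : u i ≤ b}` (0-indexed). -/
def rkIic {n : ℕ} (u : Equiv.Perm (Fin n)) (a b : Fin n) : ℕ :=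
  (Finset.univ.filter (fun i : Fin n => i ≤ a ∧ u i ≤ b)).card

/-- The Rothe diagram `D(w) = {(i,j) : w(i) > j and w⁻¹(j) > i}` (0-indexed). -/
def Dset {n : ℕ} (w : Equiv.Perm (Fin n)) : Set (Fin n × Fin n) :=
  {p | p.2 < w p.1 ∧ p.1 < w⁻¹ p.2}

/-- The essential set: cells `(i,j) ∈ D(w)` with `(i+1,j) ∉ D(w)` and `(i,j+1) ∉ D(w)`. -/
def EssSet {n : ℕ} (w : Equiv.Perm (Fin n)) : Set (Fin n × Fin n) :=
  {p | p ∈ Dset w ∧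
    (∀ q ∈ Dset w, ¬((q.1 : ℕ) = (p.1 : ℕ) + 1 ∧ q.2 = p.2)) ∧
    (∀ q ∈ Dset w, ¬(q.1 = p.1 ∧ (q.2 : ℕ) = (p.2 : ℕ) + 1))}

/-!
The inverse of the block permutation is the block permutation with `a` and `b` exchanged, so
`(i, j)` lies in the Rothe diagram exactly when `r ≤ i < a` and `r ≤ j < b` (0-indexed): the
diagram is a rectangle, and the essential set of a rectangle is its south-east corner. Among the
first `a` positions, those whose value is at most `b` are exactly the first `r`.
-/

theorem essSet_eq_singleton_of_dset_eq_Icc {n : ℕ} (w : Equiv.Perm (Fin n))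
    {lo hi : Fin n × Fin n} (hle : lo ≤ hi) (hD : Dset w = Set.Icc lo hi) :
    EssSet w = {hi} := by
  ext p
  simp only [EssSet, hD, Set.mem_ofPred_eq, Set.mem_singleton_iff, Set.mem_Icc, Prod.le_def,
    Fin.le_def]
  constructor
  · rintro ⟨⟨⟨hlo₁, hlo₂⟩, hp₁, hp₂⟩, hdown, hright⟩
    refine Prod.ext (Fin.ext (le_antisymm hp₁ ?_)) (Fin.ext (le_antisymm hp₂ ?_))
    · by_contra! hlt
      exact hdown (⟨p.1 + 1, by omega⟩, p.2) ⟨⟨Nat.le_succ_of_le hlo₁, hlo₂⟩, hlt, hp₂⟩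
        ⟨rfl, rfl⟩
    · by_contra! hlt
      exact hright (p.1, ⟨p.2 + 1, by omega⟩) ⟨⟨hlo₁, Nat.le_succ_of_le hlo₂⟩, hp₁, hlt⟩
        ⟨rfl, rfl⟩
  · rintro rfl
    refine ⟨⟨hle, le_rfl, le_rfl⟩, ?_, ?_⟩
    · rintro q ⟨-, hq₁, -⟩ ⟨hq, -⟩
      omega
    · rintro q ⟨-, -, hq₂⟩ ⟨-, hq⟩
      omega

def blockFun (a b r i : ℕ) : ℕ :=
  if i < r then i
  else if i < a then i + (b - r)
  else if i < a + b - r then i - (a - r)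
  else i

section blockFun

variable {a b r : ℕ}

theorem blockFun_lt {n i : ℕ} (hn : a + b - r ≤ n) (hi : i < n) : blockFun a b r i < n := by
  unfold blockFun
  split_ifs <;> omega

theorem blockFun_swap_blockFun (hra : r ≤ a) (hrb : r ≤ b) (i : ℕ) :
    blockFun b a r (blockFun a b r i) = i := by
  unfold blockFun
  split_ifs <;> omega

variable {n : ℕ} {π : Equiv.Perm (Fin n)}

theorem val_inv_apply_eq_blockFun (hπ : ∀ i : Fin n, (π i : ℕ) = blockFun a b r i)
    (hra : r ≤ a) (hrb : r ≤ b) (hn : a + b - r ≤ n) (j : Fin n) : (π⁻¹ j : ℕ) = blockFun b a r j := by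
  have hj : π ⟨blockFun b a r j, blockFun_lt (by omega) j.isLt⟩ = j :=
    Fin.ext <| (hπ _).trans (blockFun_swap_blockFun hrb hra j)
  rw [Equiv.Perm.inv_eq_iff_eq.2 hj.symm]

theorem dset_eq_Icc (hπ : ∀ i : Fin n, (π i : ℕ) = blockFun a b r i)
    (hra : r < a) (hrb : r < b) (hn : a + b - r ≤ n) :
    Dset π = Set.Icc (⟨r, by omega⟩, ⟨r, by omega⟩) (⟨a - 1, by omega⟩, ⟨b - 1, by omega⟩) := by
  ext ⟨i, j⟩
  simp only [Dset, Set.mem_ofPred_eq, Set.mem_Icc, Prod.mk_le_mk, Fin.le_def, Fin.lt_def,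
    hπ i, val_inv_apply_eq_blockFun hπ hra.le hrb.le hn j]
  unfold blockFun
  split_ifs <;> omega

theorem rkIic_corner_eq (hπ : ∀ i : Fin n, (π i : ℕ) = blockFun a b r i)
    (hra : r < a) (hrb : r < b) (hn : a + b - r ≤ n) :
    rkIic π ⟨a - 1, by omega⟩ ⟨b - 1, by omega⟩ = r := by
  have hfilter : Finset.univ.filter
      (fun i : Fin n => i ≤ ⟨a - 1, by omega⟩ ∧ π i ≤ ⟨b - 1, by omega⟩) = Finset.Iio ⟨r, by omega⟩ := by
    ext i
    simp only [Finset.mem_filter, Finset.mem_univ, true_and, Finset.mem_Iio, Fin.le_def,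
      Fin.lt_def, hπ i]
    unfold blockFun
    split_ifs <;> omega
  rw [rkIic, hfilter, Fin.card_Iio]

end blockFun

/-- The block bigrassmannian permutation determined by `a`, `b`, `r` has essential set
`{(a,b)}` (here written 0-indexed as `(a-1,b-1)`) and rank `r` there. -/
theorem stmt_2 (n a b r : ℕ) (hra : r < a) (hrb : r < b) (hn : a + b - r ≤ n)
    (π : Equiv.Perm (Fin n))
    (hπ : ∀ i : Fin n, (π i : ℕ) =
      if (i : ℕ) < r then (i : ℕ)
      else if (i : ℕ) < a then (i : ℕ) + (b - r)
      else if (i : ℕ) < a + b - r then (i : ℕ) - (a - r)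
      else (i : ℕ)) :
    EssSet π = {(⟨a - 1, by omega⟩, ⟨b - 1, by omega⟩)} ∧
      rkIic π ⟨a - 1, by omega⟩ ⟨b - 1, by omega⟩ = r :=
  ⟨essSet_eq_singleton_of_dset_eq_Icc π (by simp [Prod.mk_le_mk, Fin.le_def]; omega)
      (dset_eq_Icc hπ hra hrb hn),
    rkIic_corner_eq hπ hra hrb hn⟩
end

section
/- Let π ∈ S_n be a bigrassmannian permutation with Ess(π) = {(a,b)}. For any n×n alternating sign matrix A, rk_A(a,b) ≤ rk_π(a,b) if and only if rk_π(i,j) ≥ rk_A(i,j) for all i,j ∈ [n] (i.e., π ≤ A in the ASM lattice order). -/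
open Finset

/-- The nonzero entries of `f` alternate in sign: any two consecutive nonzero
entries are negatives of each other. -/
def AltSeq {n : ℕ} (f : Fin n → ℤ) : Prop :=
  ∀ j j' : Fin n, j < j' → f j ≠ 0 → f j' ≠ 0 →
    (∀ k, j < k → k < j' → f k = 0) → f j' = -f j

/-- Alternating sign matrix: entries in `{-1,0,1}`, each row and column sums to `1`,
and the nonzero entries in each row and column alternate in sign. -/
def IsASM {n : ℕ} (A : Matrix (Fin n) (Fin n) ℤ) : Prop :=
  (∀ i j, A i j = -1 ∨ A i j = 0 ∨ A i j = 1) ∧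
  (∀ i, ∑ j, A i j = 1) ∧ (∀ j, ∑ i, A i j = 1) ∧
  (∀ i, AltSeq (fun j => A i j)) ∧ (∀ j, AltSeq (fun i => A i j))

/-- Corner sum function `rk_A(a,b) = Σ_{i ≤ a} Σ_{j ≤ b} A i j`. -/
def cornerSum {n : ℕ} (A : Matrix (Fin n) (Fin n) ℤ) (a b : Fin n) : ℤ :=
  ∑ i ∈ Finset.Iic a, ∑ j ∈ Finset.Iic b, A i j

/-- The permutation matrix of `w`. -/
def permMatrix {n : ℕ} (w : Equiv.Perm (Fin n)) : Matrix (Fin n) (Fin n) ℤ :=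
  fun i j => if w i = j then 1 else 0

open scoped Matrix

/-!
For an ASM `A`, every partial row sum is `0` or `1` (the nonzero entries alternate, so partial
sums of any window lie in `[-1, 1]`, and the total is `1`), and likewise for columns. Hence the
corner rank grows by `0` or `1` at each step in either direction, giving
`rk_A(i, j) ≤ min(i, j, rk_A(a, b) + (i - a)⁺ + (j - b)⁺)`.

For the bigrassmannian `π` the reverse bound holds for `rk_π`. Moving down or right inside the
Rothe diagram does not change `rk_π`, and the diagram cells that are not essential always have
such a successor, so every diagram cell lies weakly north-west of `(a, b)` and has the rank of
`(a, b)`. Outside the diagram one of the two steps towards the origin drops the rank by exactly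
one, and induction yields `min(i, j, rk_π(a, b) + (i - a)⁺ + (j - b)⁺) ≤ rk_π(i, j)`.
Combining both bounds with `rk_A(a, b) ≤ rk_π(a, b)` gives `rk_A ≤ rk_π` everywhere.
-/

def padZero {n : ℕ} (g : Fin n → ℤ) (k : ℕ) : ℤ := if h : k < n then g ⟨k, h⟩ else 0

@[simp]
lemma padZero_fin {n : ℕ} (g : Fin n → ℤ) (k : Fin n) : padZero g k = g k := dif_pos k.isLt

lemma padZero_of_le {n : ℕ} (g : Fin n → ℤ) {k : ℕ} (hk : n ≤ k) : padZero g k = 0 :=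
  dif_neg (by omega)

def IsAlternating (f : ℕ → ℤ) : Prop :=
  ∀ j j', j < j' → f j ≠ 0 → f j' ≠ 0 → (∀ k, j < k → k < j' → f k = 0) → f j' = -f j

lemma IsAlternating.comp_add_left {f : ℕ → ℤ} (hf : IsAlternating f) (m : ℕ) :
    IsAlternating (fun k => f (m + k)) := fun j j' hjj' hj hj' hgap =>
  hf _ _ (by omega) hj hj' fun k hk hk' => by
    simpa [Nat.add_sub_cancel' (show m ≤ k by omega)] using hgap (k - m) (by omega) (by omega)

lemma AltSeq.isAlternating_padZero {n : ℕ} {g : Fin n → ℤ} (hg : AltSeq g) :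
    IsAlternating (padZero g) := by
  intro j j' hjj' hj hj' hgap
  have hjn : j < n := by by_contra h; exact hj (padZero_of_le g (by omega))
  have hjn' : j' < n := by by_contra h; exact hj' (padZero_of_le g (by omega))
  simpa [padZero, hjn, hjn'] using
    hg ⟨j, hjn⟩ ⟨j', hjn'⟩ hjj' (by simpa [padZero, hjn] using hj)
      (by simpa [padZero, hjn'] using hj') fun k hk hk' => by simpa using hgap k hk hk'

lemma IsAlternating.abs_sum_range_le_one {f : ℕ → ℤ} (hf : IsAlternating f)
    (hf1 : ∀ k, |f k| ≤ 1) (m : ℕ) : |∑ k ∈ range m, f k| ≤ 1 := by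
  have key : ∀ m, (∀ k < m, f k = 0) ∨ ∃ q < m, f q ≠ 0 ∧ (∀ k, q < k → k < m → f k = 0) ∧
      (∑ k ∈ range m, f k = 0 ∨ ∑ k ∈ range m, f k = f q) := by
    intro m
    induction m with
    | zero => exact .inl fun k hk => absurd hk k.not_lt_zero
    | succ m ih =>
      rw [sum_range_succ]
      by_cases hm : f m = 0
      · rcases ih with hzero | ⟨q, hqm, hq, hgap, hsum⟩
        · exact .inl fun k hk => (Nat.lt_succ_iff_lt_or_eq.mp hk).elim (hzero k) (· ▸ hm)
        · refine .inr ⟨q, by omega, hq, fun k hk hk' => ?_, by rwa [hm, add_zero]⟩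
          exact (Nat.lt_succ_iff_lt_or_eq.mp hk').elim (hgap k hk) (· ▸ hm)
      · refine .inr ⟨m, by omega, hm, fun k hk hk' => by omega, ?_⟩
        rcases ih with hzero | ⟨q, hqm, hq, hgap, hsum⟩
        · simp [sum_eq_zero fun k hk => hzero k (mem_range.mp hk)]
        · have := hf q m hqm hq hm hgap
          rcases hsum with h | h <;> rw [h] <;> omega
  rcases key m with hzero | ⟨q, -, -, -, hsum⟩
  · simp [sum_eq_zero fun k hk => hzero k (mem_range.mp hk)]
  · rcases hsum with h | h <;> simp [h, hf1]

lemma IsAlternating.sum_range_eq_zero_or_one {f : ℕ → ℤ} (hf : IsAlternating f)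
    (hf1 : ∀ k, |f k| ≤ 1) {N : ℕ} (hN : ∀ k, N ≤ k → f k = 0)
    (htot : ∑ k ∈ range N, f k = 1) (m : ℕ) :
    ∑ k ∈ range m, f k = 0 ∨ ∑ k ∈ range m, f k = 1 := by
  rcases le_total m N with hmN | hNm
  · have hprefix := abs_le.mp (hf.abs_sum_range_le_one hf1 m)
    have hsuffix := abs_le.mp ((hf.comp_add_left m).abs_sum_range_le_one (fun k => hf1 _) (N - m))
    have hsplit := sum_range_add_sum_Ico f hmN
    rw [sum_Ico_eq_sum_range] at hsplit
    omega
  · right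
    rw [← sum_range_add_sum_Ico f hNm, htot,
      sum_eq_zero fun k hk => hN k (mem_Ico.mp hk).1, add_zero]

lemma le_add_tsub_of_le_succ_of_succ_le_add_one {g : ℕ → ℤ} (hmono : ∀ k, g k ≤ g (k + 1))
    (hstep : ∀ k, g (k + 1) ≤ g k + 1) (k k' : ℕ) : g k' ≤ g k + (k' - k : ℕ) := by
  rcases le_total k k' with hkk' | hk'k
  · have := antitone_nat_of_succ_le (f := fun m => g m - m)
      (fun m => by push_cast; linarith [hstep m]) hkk'
    push_cast [hkk']
    linarith
  · simpa [Nat.sub_eq_zero_of_le hk'k] using monotone_nat_of_le_succ hmono hk'k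

section Matrix

variable {n : ℕ}

def padEntry (M : Matrix (Fin n) (Fin n) ℤ) (k l : ℕ) : ℤ := padZero (fun i => padZero (M i) l) k

/-- The sum over the top-left `i × j` block, entries outside `Fin n × Fin n` counting as `0`;
indices are block sizes, so `cornerSum M a b = cornerRank M (a + 1) (b + 1)`. -/
def cornerRank (M : Matrix (Fin n) (Fin n) ℤ) (i j : ℕ) : ℤ :=
  ∑ k ∈ range i, ∑ l ∈ range j, padEntry M k l

lemma padEntry_of_lt (M : Matrix (Fin n) (Fin n) ℤ) {k : ℕ} (hk : k < n) (l : ℕ) :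
    padEntry M k l = padZero (M ⟨k, hk⟩) l := dif_pos hk

lemma padEntry_transpose (M : Matrix (Fin n) (Fin n) ℤ) (k l : ℕ) :
    padEntry Mᵀ l k = padEntry M k l := by
  unfold padEntry padZero
  by_cases hk : k < n <;> by_cases hl : l < n <;> simp [hk, hl]

lemma cornerRank_transpose (M : Matrix (Fin n) (Fin n) ℤ) (i j : ℕ) :
    cornerRank Mᵀ j i = cornerRank M i j := by
  simp only [cornerRank, padEntry_transpose]
  exact sum_comm

@[simp]
lemma cornerRank_zero_left (M : Matrix (Fin n) (Fin n) ℤ) (j : ℕ) : cornerRank M 0 j = 0 := rfl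

@[simp]
lemma cornerRank_zero_right (M : Matrix (Fin n) (Fin n) ℤ) (i : ℕ) : cornerRank M i 0 = 0 := by
  simp [cornerRank]

lemma cornerRank_succ_left (M : Matrix (Fin n) (Fin n) ℤ) (i j : ℕ) :
    cornerRank M (i + 1) j = cornerRank M i j + ∑ l ∈ range j, padEntry M i l :=
  sum_range_succ _ _

lemma sum_Iic_eq_sum_range_padZero (g : Fin n → ℤ) (a : Fin n) :
    ∑ i ∈ Iic a, g i = ∑ k ∈ range (a + 1), padZero g k := by
  rw [← Nat.Iio_eq_range, Iio_add_one_eq_Iic, ← Fin.map_valEmbedding_Iic, sum_map]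
  simp

lemma cornerSum_eq_cornerRank (M : Matrix (Fin n) (Fin n) ℤ) (a b : Fin n) :
    cornerSum M a b = cornerRank M (a + 1) (b + 1) := by
  simp only [cornerSum, cornerRank, sum_Iic_eq_sum_range_padZero]
  refine sum_congr rfl fun k hk => ?_
  have hk : k < n := by have := mem_range.mp hk; omega
  simp only [padEntry_of_lt M hk, padZero, dif_pos hk]

end Matrix

section ASM

variable {n : ℕ} {A : Matrix (Fin n) (Fin n) ℤ}

lemma IsASM.transpose (hA : IsASM A) : IsASM Aᵀ :=
  ⟨fun i j => hA.1 j i, hA.2.2.1, hA.2.1, hA.2.2.2.2, hA.2.2.2.1⟩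

lemma IsASM.abs_le_one (hA : IsASM A) (i j : Fin n) : |A i j| ≤ 1 := by
  rcases hA.1 i j with h | h | h <;> simp [h]

lemma IsASM.sum_range_padEntry_eq_zero_or_one (hA : IsASM A) (i j : ℕ) :
    ∑ l ∈ range j, padEntry A i l = 0 ∨ ∑ l ∈ range j, padEntry A i l = 1 := by
  by_cases hi : i < n
  · simp only [padEntry_of_lt A hi]
    refine (hA.2.2.2.1 _).isAlternating_padZero.sum_range_eq_zero_or_one ?_
      (fun k hk => padZero_of_le _ hk) ?_ j
    · intro k
      unfold padZero
      split_ifs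
      exacts [hA.abs_le_one _ _, by simp]
    · rw [← hA.2.1 ⟨i, hi⟩, ← Fin.sum_univ_eq_sum_range]
      simp
  · simp [padEntry, padZero, hi]

lemma IsASM.cornerRank_le_add_tsub_left (hA : IsASM A) (i i' j : ℕ) :
    cornerRank A i' j ≤ cornerRank A i j + (i' - i : ℕ) := by
  have hrow := hA.sum_range_padEntry_eq_zero_or_one
  refine le_add_tsub_of_le_succ_of_succ_le_add_one (g := (cornerRank A · j))
    (fun k => ?_) (fun k => ?_) i i' <;>
    rcases hrow k j with h | h <;> rw [cornerRank_succ_left, h] <;> omega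

lemma IsASM.cornerRank_le_add_tsub_right (hA : IsASM A) (i j j' : ℕ) :
    cornerRank A i j' ≤ cornerRank A i j + (j' - j : ℕ) := by
  simpa only [cornerRank_transpose] using hA.transpose.cornerRank_le_add_tsub_left j j' i

lemma IsASM.cornerRank_le_min (hA : IsASM A) (α β i j : ℕ) :
    cornerRank A i j ≤ min (min (i : ℤ) j) (cornerRank A α β + (i - α : ℕ) + (j - β : ℕ)) := by
  have h1 := hA.cornerRank_le_add_tsub_left 0 i j
  have h2 := hA.cornerRank_le_add_tsub_right i 0 j
  have h3 := hA.cornerRank_le_add_tsub_left α i j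
  have h4 := hA.cornerRank_le_add_tsub_right α β j
  simp only [cornerRank_zero_left, cornerRank_zero_right, Nat.sub_zero] at h1 h2
  omega

end ASM

section Perm

variable {n : ℕ} (π : Equiv.Perm (Fin n))

lemma permMatrix_transpose : (permMatrix π)ᵀ = permMatrix π⁻¹ := by
  ext i j
  simp [permMatrix, Equiv.eq_symm_apply, eq_comm]

lemma cornerRank_permMatrix_succ_left (c : Fin n) (j : ℕ) :
    cornerRank (permMatrix π) (c + 1) j =
      cornerRank (permMatrix π) c j + if (π c : ℕ) < j then 1 else 0 := by
  have hrow : ∀ l, padZero (permMatrix π c) l = if l = π c then 1 else 0 := by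
    intro l
    by_cases hl : l < n
    · simp [padZero, hl, permMatrix, Fin.ext_iff, eq_comm]
    · simp [padZero_of_le _ (not_lt.mp hl), show l ≠ π c by omega]
  simp [cornerRank_succ_left, padEntry_of_lt _ c.isLt, hrow]

lemma cornerRank_permMatrix_succ_right (d : Fin n) (i : ℕ) :
    cornerRank (permMatrix π) i (d + 1) =
      cornerRank (permMatrix π) i d + if (π⁻¹ d : ℕ) < i then 1 else 0 := by
  simpa only [← cornerRank_transpose (permMatrix π), permMatrix_transpose] using
    cornerRank_permMatrix_succ_left π⁻¹ d i

lemma exists_succ_mem_Dset_of_notMem_EssSet {p : Fin n × Fin n} (hp : p ∈ Dset π)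
    (hE : p ∉ EssSet π) : ∃ q ∈ Dset π,
      ((q.1 : ℕ) = p.1 + 1 ∧ q.2 = p.2) ∨ (q.1 = p.1 ∧ (q.2 : ℕ) = p.2 + 1) := by
  by_contra! h
  exact hE ⟨hp, fun q hq ⟨h1, h2⟩ => (h q hq).1 h1 h2, fun q hq ⟨h1, h2⟩ => (h q hq).2 h1 h2⟩

variable {π} {a b : Fin n}

lemma cornerRank_permMatrix_of_mem_Dset (hbg : EssSet π = {(a, b)}) (p : Fin n × Fin n)
    (hp : p ∈ Dset π) :
    p.1 ≤ a ∧ p.2 ≤ b ∧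
      cornerRank (permMatrix π) (p.1 + 1) (p.2 + 1) =
        cornerRank (permMatrix π) (a + 1) (b + 1) := by
  by_cases hE : p ∈ EssSet π
  · rw [hbg, Set.mem_singleton_iff] at hE
    subst hE
    exact ⟨le_rfl, le_rfl, rfl⟩
  obtain ⟨q, hq, ⟨hq1, hq2⟩ | ⟨hq1, hq2⟩⟩ := exists_succ_mem_Dset_of_notMem_EssSet π hp hE
  · obtain ⟨ha, hb, hrank⟩ := cornerRank_permMatrix_of_mem_Dset hbg q hq
    have hstep := cornerRank_permMatrix_succ_left π q.1 (p.2 + 1)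
    have hq' : q.2 < π q.1 := hq.1
    rw [if_neg (by omega), add_zero, hq1] at hstep
    refine ⟨Fin.le_def.mpr (by omega), hq2 ▸ hb, ?_⟩
    rw [← hrank, hq1, hq2, hstep]
  · obtain ⟨ha, hb, hrank⟩ := cornerRank_permMatrix_of_mem_Dset hbg q hq
    have hstep := cornerRank_permMatrix_succ_right π q.2 (p.1 + 1)
    have hq' : q.1 < π⁻¹ q.2 := hq.2
    rw [if_neg (by omega), add_zero, hq2] at hstep
    refine ⟨hq1 ▸ ha, Fin.le_def.mpr (by omega), ?_⟩
    rw [← hrank, hq1, hq2, hstep]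
termination_by 2 * n - (p.1 + p.2)
decreasing_by all_goals omega

lemma min_le_cornerRank_permMatrix (hbg : EssSet π = {(a, b)}) :
    ∀ i j : ℕ, i ≤ n → j ≤ n →
      min (min (i : ℤ) j) (cornerRank (permMatrix π) (a + 1) (b + 1) + (i - (a + 1) : ℕ) +
        (j - (b + 1) : ℕ)) ≤ cornerRank (permMatrix π) i j
  | 0, j, _, _ => by simp
  | i + 1, 0, _, _ => by simp
  | c + 1, d + 1, hc, hd => by
    let c' : Fin n := ⟨c, hc⟩
    let d' : Fin n := ⟨d, hd⟩
    by_cases hD : (c', d') ∈ Dset π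
    · obtain ⟨ha, hb, hrank⟩ := cornerRank_permMatrix_of_mem_Dset hbg _ hD
      simp only [c', d', Fin.le_def] at ha hb hrank
      omega
    · rcases not_and_or.mp hD with h | h
      · have ih := min_le_cornerRank_permMatrix hbg c (d + 1) (by omega) hd
        have hle : (π c' : ℕ) ≤ d := not_lt.mp h
        have hstep := cornerRank_permMatrix_succ_left π c' (d + 1)
        rw [if_pos (by omega)] at hstep
        simp only [c'] at hstep
        omega
      · have ih := min_le_cornerRank_permMatrix hbg (c + 1) d hc (by omega)
        have hle : (π⁻¹ d' : ℕ) ≤ c := not_lt.mp h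
        have hstep := cornerRank_permMatrix_succ_right π d' (c + 1)
        rw [if_pos (by omega)] at hstep
        simp only [d'] at hstep
        omega

end Perm

/-- For a bigrassmannian `π` with `Ess(π) = {(a,b)}` and an ASM `A`:
`rk_A(a,b) ≤ rk_π(a,b)` iff `rk_π ≥ rk_A` entrywise (i.e. `π ≤ A`). -/
theorem stmt_3 (n : ℕ) (π : Equiv.Perm (Fin n)) (a b : Fin n)
    (hbg : EssSet π = {(a, b)})
    (A : Matrix (Fin n) (Fin n) ℤ) (hA : IsASM A) :
    cornerSum A a b ≤ cornerSum (permMatrix π) a b ↔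
      ∀ i j : Fin n, cornerSum A i j ≤ cornerSum (permMatrix π) i j := by
  simp only [cornerSum_eq_cornerRank]
  refine ⟨fun hab i j => ?_, fun h => h a b⟩
  have hA_le := hA.cornerRank_le_min (a + 1) (b + 1) (i + 1) (j + 1)
  have hπ_ge := min_le_cornerRank_permMatrix hbg (i + 1) (j + 1) i.isLt j.isLt
  omega
end

section
/- For n×n alternating sign matrices A and B, the entrywise minimum of the corner sum matrices rk_A and rk_B is the corner sum matrix of an alternating sign matrix (namely the join A ∨ B), and similarly the entrywise maximum is the corner sum matrix of an ASM (the meet A ∧ B). -/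
/-!
Extend `rk_A` by a zero row and column. The corner sum functions of `n × n` alternating sign
matrices are exactly the integer functions `r` on `{0, …, n}²` with `r 0 j = r i 0 = 0`,
`r n j = j`, `r i n = i`, whose steps `r (i+1) j - r i j` and `r i (j+1) - r i j` are `0` or `1`:
a `{-1, 0, 1}`-vector with total sum `1` has all its partial sums in `{0, 1}` exactly when its
nonzero entries alternate in sign. Pointwise `min` and `max` preserve these conditions, since
both are monotone and commute with adding `1`.
-/

open Finset

open Matrix

section PrefixSum

variable {n : ℕ} {M : Type*}

def prefixSum [AddCommMonoid M] (f : Fin n → M) (m : ℕ) : M :=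
  ∑ j ∈ univ.filter (fun j : Fin n => (j : ℕ) < m), f j

@[simp]
lemma prefixSum_zero [AddCommMonoid M] (f : Fin n → M) : prefixSum f 0 = 0 := by
  simp [prefixSum]

lemma prefixSum_succ [AddCommMonoid M] (f : Fin n → M) (j : Fin n) :
    prefixSum f (j + 1) = prefixSum f j + f j := by
  have : univ.filter (fun k : Fin n => (k : ℕ) < j + 1) =
      insert j (univ.filter fun k : Fin n => (k : ℕ) < j) := by
    ext k
    simp only [mem_filter, mem_univ, true_and, mem_insert, Fin.ext_iff]
    omega
  rw [prefixSum, this, sum_insert (by simp), add_comm, prefixSum]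

lemma prefixSum_eq_sum [AddCommMonoid M] (f : Fin n → M) : prefixSum f n = ∑ j, f j := by
  simp [prefixSum]

lemma prefixSum_eq_sub [AddCommGroup M] {f : Fin n → M} {g : ℕ → M}
    (hfg : ∀ j : Fin n, f j = g (j + 1) - g j) {m : ℕ} (hm : m ≤ n) :
    prefixSum f m = g m - g 0 := by
  induction m with
  | zero => simp
  | succ m ih => rw [prefixSum_succ f ⟨m, hm⟩, ih (by omega), hfg]; abel

lemma prefixSum_eq_of_eq_zero [AddCommMonoid M] {f : Fin n → M} {a b : ℕ} (hab : a ≤ b)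
    (hb : b ≤ n) (hf : ∀ k : Fin n, a ≤ k → (k : ℕ) < b → f k = 0) :
    prefixSum f b = prefixSum f a := by
  induction b, hab using Nat.le_induction with
  | base => rfl
  | succ b hab ih =>
    rw [prefixSum_succ f ⟨b, hb⟩, hf ⟨b, hb⟩ hab (by simp), add_zero,
      ih (by omega) fun k hak hkb => hf k hak (by omega)]

end PrefixSum

section Line

variable {n : ℕ}

def IsASMLine (f : Fin n → ℤ) : Prop :=
  (∀ j, f j = -1 ∨ f j = 0 ∨ f j = 1) ∧ ∑ j, f j = 1 ∧ AltSeq f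

lemma isASM_iff_isASMLine {A : Matrix (Fin n) (Fin n) ℤ} :
    IsASM A ↔ (∀ i, IsASMLine (A i)) ∧ ∀ j, IsASMLine (Aᵀ j) := by
  constructor
  · rintro ⟨hval, hrow, hcol, haltRow, haltCol⟩
    exact ⟨fun i => ⟨hval i, hrow i, haltRow i⟩, fun j => ⟨fun i => hval i j, hcol j, haltCol j⟩⟩
  · rintro ⟨hrow, hcol⟩
    exact ⟨fun i => (hrow i).1, fun i => (hrow i).2.1, fun j => (hcol j).2.1,
      fun i => (hrow i).2.2, fun j => (hcol j).2.2⟩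

/-- By alternation, each new nonzero term cancels the last one before it. -/
lemma prefixSum_sub_eq_zero_or_last {f : Fin n → ℤ} (hf : AltSeq f) {m m' : ℕ} (hmm' : m ≤ m')
    (hm' : m' ≤ n) :
    prefixSum f m' - prefixSum f m = 0 ∨
      ∃ j : Fin n, (j : ℕ) < m' ∧ (∀ k : Fin n, j < k → (k : ℕ) < m' → f k = 0) ∧
        prefixSum f m' - prefixSum f m = f j := by
  induction m', hmm' using Nat.le_induction with
  | base => simp
  | succ m' hmm' ih =>
    set x : Fin n := ⟨m', hm'⟩
    rw [prefixSum_succ f x]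
    rcases eq_or_ne (f x) 0 with hx | hx
    · rcases ih (by omega) with h | ⟨j, hj, hzero, h⟩
      · left; linarith
      · refine .inr ⟨j, by omega, fun k hjk hk => ?_, by linarith⟩
        rcases Nat.lt_succ_iff_lt_or_eq.mp hk with hk | hk
        · exact hzero k hjk hk
        · rwa [show k = x from Fin.ext hk]
    · by_cases hS : prefixSum f m' - prefixSum f m = 0
      · refine .inr ⟨x, by simp [x], fun k hxk hk => ?_, by linarith⟩
        simp only [Fin.lt_def, x] at hxk
        omega
      · obtain ⟨j, hj, hzero, h⟩ := (ih (by omega)).resolve_left hS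
        have := hf j x (Fin.lt_def.mpr hj) (h ▸ hS) hx fun k hjk hkx => hzero k hjk hkx
        left; linarith

lemma altSeq_of_prefixSum {f : Fin n → ℤ}
    (h : ∀ m ≤ n, 0 ≤ prefixSum f m ∧ prefixSum f m ≤ 1) : AltSeq f := by
  intro j j' hjj' hj hj' hzero
  have hconst : prefixSum f j' = prefixSum f (j + 1) :=
    prefixSum_eq_of_eq_zero hjj' j'.isLt.le fun k hk hk' => hzero k hk hk'
  have := prefixSum_succ f j
  have := prefixSum_succ f j'
  have := h j j.isLt.le
  have := h (j + 1) j.isLt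
  have := h j' j'.isLt.le
  have := h (j' + 1) j'.isLt
  omega

lemma isASMLine_iff {f : Fin n → ℤ} :
    IsASMLine f ↔ prefixSum f n = 1 ∧ ∀ m ≤ n, 0 ≤ prefixSum f m ∧ prefixSum f m ≤ 1 := by
  rw [prefixSum_eq_sum]
  constructor
  · rintro ⟨hval, hsum, halt⟩
    have hblock {m m'} (h : m ≤ m') (h' : m' ≤ n) : |prefixSum f m' - prefixSum f m| ≤ 1 := by
      rcases prefixSum_sub_eq_zero_or_last halt h h' with h | ⟨j, -, -, h⟩ <;> rw [h]
      · simp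
      · rcases hval j with h | h | h <;> simp [h]
    refine ⟨hsum, fun m hm => ?_⟩
    have h₀ := abs_le.mp (hblock (Nat.zero_le m) hm)
    have h₁ := abs_le.mp (hblock hm le_rfl)
    rw [prefixSum_zero] at h₀
    rw [prefixSum_eq_sum, hsum] at h₁
    constructor <;> linarith [h₀.1, h₀.2, h₁.1, h₁.2]
  · rintro ⟨hsum, hmem⟩
    refine ⟨fun j => ?_, hsum, altSeq_of_prefixSum hmem⟩
    have := prefixSum_succ f j
    have := hmem j j.isLt.le
    have := hmem (j + 1) j.isLt
    omega

end Line

section Rank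

variable {n : ℕ}

def extCornerSum (A : Matrix (Fin n) (Fin n) ℤ) (i j : ℕ) : ℤ :=
  prefixSum (fun i' => prefixSum (A i') j) i

lemma cornerSum_eq_extCornerSum (A : Matrix (Fin n) (Fin n) ℤ) (a b : Fin n) :
    cornerSum A a b = extCornerSum A (a + 1) (b + 1) := by
  have hIic (c : Fin n) : Iic c = univ.filter fun k : Fin n => (k : ℕ) < c + 1 := by
    ext k
    simp only [mem_Iic, mem_filter, mem_univ, true_and, Fin.le_def]
    omega
  simp only [cornerSum, extCornerSum, prefixSum, hIic]

lemma extCornerSum_succ_left (A : Matrix (Fin n) (Fin n) ℤ) (i : Fin n) (j : ℕ) :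
    extCornerSum A (i + 1) j = extCornerSum A i j + prefixSum (A i) j :=
  prefixSum_succ _ i

lemma extCornerSum_transpose (A : Matrix (Fin n) (Fin n) ℤ) (i j : ℕ) :
    extCornerSum Aᵀ i j = extCornerSum A j i := by
  simp only [extCornerSum, prefixSum, transpose_apply]
  exact sum_comm

def IsASMRankRows (n : ℕ) (r : ℕ → ℕ → ℤ) : Prop :=
  (∀ j ≤ n, r 0 j = 0) ∧ (∀ i ≤ n, r i n = i) ∧
    ∀ i < n, ∀ j ≤ n, r i j ≤ r (i + 1) j ∧ r (i + 1) j ≤ r i j + 1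

def IsASMRank (n : ℕ) (r : ℕ → ℕ → ℤ) : Prop :=
  IsASMRankRows n r ∧ IsASMRankRows n fun i j => r j i

lemma isASMRankRows_extCornerSum_iff {A : Matrix (Fin n) (Fin n) ℤ} :
    IsASMRankRows n (extCornerSum A) ↔ ∀ i, IsASMLine (A i) := by
  simp only [isASMLine_iff]
  constructor
  · rintro ⟨-, hlast, hstep⟩ i
    have hrow := extCornerSum_succ_left A i
    refine ⟨?_, fun m hm => ?_⟩
    · have := hlast (i + 1) i.isLt
      have := hlast i i.isLt.le
      have := hrow n
      push_cast at *
      linarith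
    · have := hstep i i.isLt m hm
      have := hrow m
      constructor <;> linarith
  · intro hA
    refine ⟨fun j _ => prefixSum_zero _, fun i hi => ?_, fun i hi j hj => ?_⟩
    · rw [extCornerSum, prefixSum_eq_sub (g := Nat.cast)
        (fun i' => by rw [(hA i').1]; push_cast; ring) hi]
      simp
    · have := extCornerSum_succ_left A ⟨i, hi⟩ j
      have := (hA ⟨i, hi⟩).2 j hj
      constructor <;> linarith

lemma isASMRank_extCornerSum_iff {A : Matrix (Fin n) (Fin n) ℤ} :
    IsASMRank n (extCornerSum A) ↔ IsASM A := by
  have hswap : (fun i j => extCornerSum A j i) = extCornerSum Aᵀ := by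
    funext i j
    exact (extCornerSum_transpose A i j).symm
  rw [IsASMRank, hswap, isASMRankRows_extCornerSum_iff, isASMRankRows_extCornerSum_iff,
    isASM_iff_isASMLine]

lemma IsASMRankRows.congr {r s : ℕ → ℕ → ℤ} (hr : IsASMRankRows n r)
    (hrs : ∀ i ≤ n, ∀ j ≤ n, r i j = s i j) : IsASMRankRows n s := by
  obtain ⟨hr0, hrn, hstep⟩ := hr
  refine ⟨fun j hj => ?_, fun i hi => ?_, fun i hi j hj => ?_⟩
  · rw [← hrs 0 (Nat.zero_le n) j hj, hr0 j hj]
  · rw [← hrs i hi n le_rfl, hrn i hi]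
  · rw [← hrs i hi.le j hj, ← hrs (i + 1) hi j hj]
    exact hstep i hi j hj

lemma IsASMRank.congr {r s : ℕ → ℕ → ℤ} (hr : IsASMRank n r)
    (hrs : ∀ i ≤ n, ∀ j ≤ n, r i j = s i j) : IsASMRank n s :=
  ⟨hr.1.congr hrs, hr.2.congr fun i hi j hj => hrs j hj i hi⟩

lemma IsASMRankRows.min {r s : ℕ → ℕ → ℤ} (hr : IsASMRankRows n r) (hs : IsASMRankRows n s) :
    IsASMRankRows n fun i j => min (r i j) (s i j) := by
  obtain ⟨hr0, hrn, hrstep⟩ := hr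
  obtain ⟨hs0, hsn, hsstep⟩ := hs
  refine ⟨fun j hj => by simp [hr0 j hj, hs0 j hj], fun i hi => by simp [hrn i hi, hsn i hi],
    fun i hi j hj => ?_⟩
  obtain ⟨hr₁, hr₂⟩ := hrstep i hi j hj
  obtain ⟨hs₁, hs₂⟩ := hsstep i hi j hj
  exact ⟨min_le_min hr₁ hs₁, (min_le_min hr₂ hs₂).trans_eq (min_add_add_right _ _ _)⟩

lemma IsASMRankRows.max {r s : ℕ → ℕ → ℤ} (hr : IsASMRankRows n r) (hs : IsASMRankRows n s) :
    IsASMRankRows n fun i j => max (r i j) (s i j) := by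
  obtain ⟨hr0, hrn, hrstep⟩ := hr
  obtain ⟨hs0, hsn, hsstep⟩ := hs
  refine ⟨fun j hj => by simp [hr0 j hj, hs0 j hj], fun i hi => by simp [hrn i hi, hsn i hi],
    fun i hi j hj => ?_⟩
  obtain ⟨hr₁, hr₂⟩ := hrstep i hi j hj
  obtain ⟨hs₁, hs₂⟩ := hsstep i hi j hj
  exact ⟨max_le_max hr₁ hs₁, (max_le_max hr₂ hs₂).trans_eq (max_add_add_right _ _ _)⟩

lemma IsASMRank.min {r s : ℕ → ℕ → ℤ} (hr : IsASMRank n r) (hs : IsASMRank n s) :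
    IsASMRank n fun i j => min (r i j) (s i j) :=
  ⟨hr.1.min hs.1, hr.2.min hs.2⟩

lemma IsASMRank.max {r s : ℕ → ℕ → ℤ} (hr : IsASMRank n r) (hs : IsASMRank n s) :
    IsASMRank n fun i j => max (r i j) (s i j) :=
  ⟨hr.1.max hs.1, hr.2.max hs.2⟩

def cornerDiff (r : ℕ → ℕ → ℤ) : Matrix (Fin n) (Fin n) ℤ :=
  fun i j => r (i + 1) (j + 1) - r i (j + 1) - r (i + 1) j + r i j

lemma extCornerSum_cornerDiff (r : ℕ → ℕ → ℤ) {i j : ℕ} (hi : i ≤ n) (hj : j ≤ n) :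
    extCornerSum (cornerDiff (n := n) r) i j = r i j - r i 0 - r 0 j + r 0 0 := by
  rw [extCornerSum, prefixSum_eq_sub (g := fun i => r i j - r i 0) (fun i' => ?_) hi]
  · ring
  · rw [prefixSum_eq_sub (g := fun j => r (i' + 1) j - r i' j)
      (fun j' => by simp only [cornerDiff]; ring) hj]
    ring

lemma exists_isASM_cornerSum_eq {r : ℕ → ℕ → ℤ} (hr : IsASMRank n r) :
    ∃ C : Matrix (Fin n) (Fin n) ℤ, IsASM C ∧
      ∀ a b : Fin n, cornerSum C a b = r (a + 1) (b + 1) := by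
  have hC : ∀ i ≤ n, ∀ j ≤ n, r i j = extCornerSum (cornerDiff (n := n) r) i j := by
    intro i hi j hj
    have hi0 : r i 0 = 0 := hr.2.1 i hi
    rw [extCornerSum_cornerDiff r hi hj, hi0, hr.1.1 j hj, hr.1.1 0 (Nat.zero_le n)]
    ring
  exact ⟨cornerDiff r, isASMRank_extCornerSum_iff.1 (hr.congr hC),
    fun a b => by rw [cornerSum_eq_extCornerSum, hC _ a.isLt _ b.isLt]⟩

end Rank

/-- The entrywise min (resp. max) of the corner sum matrices of two ASMs is the corner
sum matrix of an ASM, namely the join (resp. meet) in the ASM lattice. -/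
theorem stmt_4 (n : ℕ) (A B : Matrix (Fin n) (Fin n) ℤ)
    (hA : IsASM A) (hB : IsASM B) :
    (∃ C : Matrix (Fin n) (Fin n) ℤ, IsASM C ∧
      ∀ i j : Fin n, cornerSum C i j = min (cornerSum A i j) (cornerSum B i j)) ∧
    (∃ C : Matrix (Fin n) (Fin n) ℤ, IsASM C ∧
      ∀ i j : Fin n, cornerSum C i j = max (cornerSum A i j) (cornerSum B i j)) := by
  have hRA := isASMRank_extCornerSum_iff.2 hA
  have hRB := isASMRank_extCornerSum_iff.2 hB
  constructor
  · obtain ⟨C, hC, hCr⟩ := exists_isASM_cornerSum_eq (hRA.min hRB)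
    exact ⟨C, hC, fun i j => by simp only [hCr, cornerSum_eq_extCornerSum]⟩
  · obtain ⟨C, hC, hCr⟩ := exists_isASM_cornerSum_eq (hRA.max hRB)
    exact ⟨C, hC, fun i j => by simp only [hCr, cornerSum_eq_extCornerSum]⟩
end

section
/- Let w ∈ S_n and let (a,b) be a lower outside corner of the Rothe diagram D(w), i.e., a maximally southeast element of D(w). Set v = w·t_{a,w⁻¹(b)}. Then D(w) = D(v) ∪ {(a,b)} (disjoint union) and ℓ(w) = ℓ(v) + 1. -/
/-- Coxeter length: number of inversions. -/
def len {n : ℕ} (u : Equiv.Perm (Fin n)) : ℕ :=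
  (Finset.univ.filter (fun p : Fin n × Fin n => p.1 < p.2 ∧ u p.2 < u p.1)).card

/-- `(a,b)` is a lower outside corner (maximally southeast element) of `D(w)`:
no other cell of `D(w)` lies weakly southeast of it. -/
def IsLOC {n : ℕ} (w : Equiv.Perm (Fin n)) (p : Fin n × Fin n) : Prop :=
  p ∈ Dset w ∧ ∀ q ∈ Dset w, p.1 ≤ q.1 → p.2 ≤ q.2 → q = p

/-!
Write `c = w⁻¹ b`, so `a < c` and `b < w a`. Maximality of the corner `(a, b)`, applied to the
cells `(a, w k)` and `(i, b)`, says that `a < k`, `w k < w a` force `w k ≤ b`, and that `b < w i`,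
`i < c` force `i ≤ a`. Swapping the entries of rows `a` and `c` then changes no cell of the
diagram except `(a, b)`, which is removed. Since `(i, k) ↦ (i, u k)` maps the inversions of `u`
bijectively onto `D(u)`, the length drops by exactly one.
-/

open Equiv

variable {n : ℕ}

theorem len_eq_ncard_Dset (u : Perm (Fin n)) : len u = (Dset u).ncard := by
  rw [len, ← Set.ncard_coe_finset]
  refine Set.ncard_congr (fun p _ => (p.1, u p.2)) ?_ ?_ ?_
  · rintro ⟨i, k⟩ hik
    simp only [Finset.coe_filter, Finset.mem_univ, true_and, Set.mem_ofPred_eq] at hik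
    exact ⟨hik.2, by simpa using hik.1⟩
  · rintro ⟨i, k⟩ ⟨i', k'⟩ - - h
    simpa using h
  · rintro ⟨i, j⟩ ⟨hj, hi⟩
    exact ⟨(i, u⁻¹ j), by simpa using And.intro hi hj, by simp⟩

theorem notMem_Dset_mul_swap (w : Perm (Fin n)) (a b : Fin n) :
    (a, b) ∉ Dset (w * swap a (w⁻¹ b)) := by
  rintro ⟨-, hab⟩
  simp [mul_inv_rev] at hab

namespace IsLOC

variable {w : Perm (Fin n)} {a b : Fin n}

theorem apply_le_of_lt {k : Fin n} (h : IsLOC w (a, b)) (hak : a < k) (hk : w k < w a) :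
    w k ≤ b := by
  by_contra! hbk
  have := h.2 (a, w k) ⟨hk, by simpa using hak⟩ le_rfl hbk.le
  exact hbk.ne' (congrArg Prod.snd this)

theorem le_of_lt_inv_apply {i : Fin n} (h : IsLOC w (a, b)) (hbi : b < w i)
    (hic : i < w⁻¹ b) : i ≤ a := by
  by_contra! hai
  have := h.2 (i, b) ⟨hbi, hic⟩ hai.le le_rfl
  exact hai.ne' (congrArg Prod.fst this)

theorem mem_Dset_mul_swap_iff {i k : Fin n} (h : IsLOC w (a, b))
    (hik : (i, k) ≠ (a, w⁻¹ b)) :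
    (i, w k) ∈ Dset (w * swap a (w⁻¹ b)) ↔ (i, w k) ∈ Dset w := by
  have hba : b < w a := h.1.1
  have hac : a < w⁻¹ b := h.1.2
  set c := w⁻¹ b
  have hwc : w c = b := by simp [c]
  simp only [Dset, Set.mem_ofPred_eq, Perm.mul_apply, mul_inv_rev, swap_inv, Perm.coe_inv,
    symm_apply_apply]
  rcases eq_or_ne i a with hia | hia
  · subst i
    have hkc : k ≠ c := by rintro rfl; exact hik rfl
    have hwkb : w k ≠ b := by rwa [Ne, ← eq_symm_apply]
    rcases eq_or_ne k a with hka | hka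
    · simp [hka, hwc, hba.not_gt]
    rw [swap_apply_left, hwc, swap_apply_of_ne_of_ne hka hkc]
    exact and_congr_left fun hak =>
      ⟨fun hk => hk.trans hba, fun hk => (h.apply_le_of_lt hak hk).lt_of_ne hwkb⟩
  rcases eq_or_ne i c with hic | hic
  · subst i
    rcases eq_or_ne k a with hka | hka
    · simp [hka, hac.not_gt]
    rcases eq_or_ne k c with hkc | hkc
    · simp [hkc, hac.not_gt]
    have hwkb : w k ≠ b := by rwa [Ne, ← eq_symm_apply]
    rw [swap_apply_right, swap_apply_of_ne_of_ne hka hkc, hwc]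
    exact and_congr_left fun hck =>
      ⟨fun hk => (h.apply_le_of_lt (hac.trans hck) hk).lt_of_ne hwkb, fun hk => hk.trans hba⟩
  rw [swap_apply_of_ne_of_ne hia hic]
  rcases eq_or_ne k a with hka | hka
  · subst k
    rw [swap_apply_left]
    exact and_congr_right fun hai =>
      ⟨fun hic => (h.le_of_lt_inv_apply (hba.trans hai) hic).lt_of_ne hia,
        fun hia => hia.trans hac⟩
  rcases eq_or_ne k c with hkc | hkc
  · subst k
    rw [swap_apply_right, hwc]
    exact and_congr_right fun hbi =>
      ⟨fun hia => hia.trans hac, fun hic => (h.le_of_lt_inv_apply hbi hic).lt_of_ne hia⟩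
  rw [swap_apply_of_ne_of_ne hka hkc]

theorem Dset_eq_insert (h : IsLOC w (a, b)) :
    Dset w = insert (a, b) (Dset (w * swap a (w⁻¹ b))) := by
  ext ⟨i, j⟩
  obtain ⟨k, rfl⟩ := w.surjective j
  by_cases hik : (i, k) = (a, w⁻¹ b)
  · obtain ⟨rfl, rfl⟩ := Prod.mk.inj hik
    simpa using h.1
  · have hij : (i, w k) ≠ (a, b) := by
      contrapose! hik
      simp_all [eq_symm_apply]
    rw [Set.mem_insert_iff, or_iff_right hij, h.mem_Dset_mul_swap_iff hik]

end IsLOC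

/-- If `(a,b)` is a lower outside corner of `D(w)` and `v = w·t_{a,w⁻¹(b)}`, then
`D(w) = D(v) ⊔ {(a,b)}` and `ℓ(w) = ℓ(v) + 1`. -/
theorem stmt_5 (n : ℕ) (w : Equiv.Perm (Fin n)) (a b : Fin n)
    (h : IsLOC w (a, b)) :
    Dset w = insert (a, b) (Dset (w * Equiv.swap a (w⁻¹ b))) ∧
    (a, b) ∉ Dset (w * Equiv.swap a (w⁻¹ b)) ∧
    len w = len (w * Equiv.swap a (w⁻¹ b)) + 1 := by
  refine ⟨h.Dset_eq_insert, notMem_Dset_mul_swap w a b, ?_⟩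
  rw [len_eq_ncard_Dset, len_eq_ncard_Dset, h.Dset_eq_insert,
    Set.ncard_insert_of_notMem (notMem_Dset_mul_swap w a b)]
end

section
/- Let w ∈ S_n, let (a,b) be a lower outside corner of D(w), and let v = w·t_{a,w⁻¹(b)}. Then for all c,d ∈ [n]: rk_v(c,d) − rk_w(c,d) = 1 if a ≤ c < w⁻¹(b) and b ≤ d < w(a), and rk_v(c,d) − rk_w(c,d) = 0 otherwise. -/
/-! Only the rows `i` and `j` of the permutation matrix move, so the two rank functions
differ by the contributions of these two rows, and a comparison of positions shows that the
difference is the indicator of the rectangle `[i, j) × [w j, w i)`. -/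

theorem rkIic_eq_sum {n : ℕ} (u : Equiv.Perm (Fin n)) (c d : Fin n) :
    rkIic u c d = ∑ k, if k ≤ c ∧ u k ≤ d then 1 else 0 :=
  Finset.card_filter _ _

theorem sum_eq_add_add_sum_erase_erase {ι M : Type*} [Fintype ι] [DecidableEq ι]
    [AddCommMonoid M] {i j : ι} (hij : i ≠ j) (f : ι → M) :
    ∑ k, f k = f i + f j + ∑ k ∈ (Finset.univ.erase i).erase j, f k := by
  rw [← Finset.add_sum_erase _ f (Finset.mem_univ i),
    ← Finset.add_sum_erase _ f (Finset.mem_erase.mpr ⟨hij.symm, Finset.mem_univ j⟩), add_assoc]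

theorem rkIic_mul_swap_of_lt {n : ℕ} (w : Equiv.Perm (Fin n)) {i j : Fin n} (hij : i < j)
    (hw : w j < w i) (c d : Fin n) :
    rkIic (w * Equiv.swap i j) c d =
      rkIic w c d + (if i ≤ c ∧ c < j ∧ w j ≤ d ∧ d < w i then 1 else 0) := by
  have hoff : ∀ k ∈ (Finset.univ.erase i).erase j,
      (if k ≤ c ∧ (w * Equiv.swap i j) k ≤ d then 1 else 0) =
        if k ≤ c ∧ w k ≤ d then 1 else 0 := by
    intro k hk
    simp only [Finset.mem_erase] at hk
    obtain ⟨hkj, hki, -⟩ := hk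
    rw [Equiv.Perm.mul_apply, Equiv.swap_apply_of_ne_of_ne hki hkj]
  rw [rkIic_eq_sum, rkIic_eq_sum, sum_eq_add_add_sum_erase_erase hij.ne,
    sum_eq_add_add_sum_erase_erase hij.ne, Finset.sum_congr rfl hoff]
  simp only [Equiv.Perm.mul_apply, Equiv.swap_apply_left, Equiv.swap_apply_right]
  rw [Fin.lt_def] at hij hw
  simp only [Fin.le_def, Fin.lt_def]
  split_ifs <;> omega

/-- For a lower outside corner `(a,b)` of `D(w)` and `v = w·t_{a,w⁻¹(b)}`:
`rk_v(c,d) − rk_w(c,d)` is `1` on the rectangle `a ≤ c < w⁻¹(b)`, `b ≤ d < w(a)`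
and `0` otherwise. -/
theorem stmt_6 (n : ℕ) (w : Equiv.Perm (Fin n)) (a b : Fin n)
    (h : IsLOC w (a, b)) (c d : Fin n) :
    rkIic (w * Equiv.swap a (w⁻¹ b)) c d =
      rkIic w c d + (if a ≤ c ∧ c < w⁻¹ b ∧ b ≤ d ∧ d < w a then 1 else 0) := by
  obtain ⟨⟨hb, ha⟩, -⟩ := h
  have hwb : w (w⁻¹ b) = b := w.apply_symm_apply b
  have hdesc : w (w⁻¹ b) < w a := hwb.symm ▸ hb
  simpa only [hwb] using rkIic_mul_swap_of_lt w ha hdesc c d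
end

section
/- Let v ∈ S_n, fix a < n with v(a) = b, and let U = {i_1 < i_2 < ... < i_k} ⊆ [a−1] be a nonempty set such that for each i ∈ U, ℓ(v·t_{i,a}) = ℓ(v)+1 and v·t_{i,a} > v in Bruhat order. Define w_U = v·(a i_k i_{k−1} ... i_1) (cycle notation). Then rk_{w_U}(c,d) = min{rk_{v·t_{i,a}}(c,d) : i ∈ U} for all c,d ∈ [n]; that is, w_U is the join of {v·t_{i,a} : i ∈ U} in the ASM lattice. -/
/-- Strong Bruhat order: transitive closure of the covering relations. -/
def bruhatLE {n : ℕ} (u v : Equiv.Perm (Fin n)) : Prop :=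
  Relation.ReflTransGen
    (fun x y => ∃ i j : Fin n, i ≠ j ∧ y = x * Equiv.swap i j ∧ len y = len x + 1) u v

/-! The cover condition `ℓ(v·t_{i,a}) = ℓ(v) + 1` says that `v(i) < v(a)` and that no position
strictly between `i` and `a` carries a value strictly between `v(i)` and `v(a)`; for the `i_ℓ` this
forces `v(a) > v(i_0) > ⋯ > v(i_k)`. Right multiplication by such a transposition lowers `rk(c,d)`
by one exactly on the rectangle `i ≤ c < a`, `v(i) ≤ d < v(a)`. Writing
`w_U = v·t_{i_0,a}·t_{i_1,a}⋯t_{i_k,a}`, the successive rectangles are the staircase pieces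
`i_ℓ ≤ c < a`, `v(i_ℓ) ≤ d < v(i_{ℓ-1})`, whose union is the union of the rectangles of the
`v·t_{i_ℓ,a}`. So `rk_{w_U}` is `rk_v` lowered by one on that union, which is the pointwise
minimum of the `rk_{v·t_{i_ℓ,a}}`. -/

open Equiv Finset

variable {n : ℕ}

theorem lt_and_swap_apply_lt_iff {p q x y : Fin n} (hpq : p < q) :
    x < y ∧ swap p q y < swap p q x ↔ (x = p ∧ p < y ∧ y ≤ q) ∨ (p < x ∧ x < q ∧ y = q) := by
  rw [swap_apply_def, swap_apply_def]
  split_ifs <;> subst_vars <;> omega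

theorem len_mul_add_card (u σ : Perm (Fin n)) :
    len (u * σ) + #{z : Fin n × Fin n | z.1 < z.2 ∧ σ.symm z.2 < σ.symm z.1 ∧ u z.2 < u z.1} =
      len u + #{z : Fin n × Fin n | z.1 < z.2 ∧ σ.symm z.2 < σ.symm z.1 ∧ u z.1 < u z.2} := by
  have hlen : len (u * σ) = #{z : Fin n × Fin n | σ.symm z.1 < σ.symm z.2 ∧ u z.2 < u z.1} := by
    rw [len]
    refine card_equiv (σ.prodCongr σ) fun z => ?_
    rw [mem_filter, mem_filter]
    simp only [mem_univ, true_and, prodCongr_apply, Prod.map_fst, Prod.map_snd,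
      symm_apply_apply, Perm.mul_apply]
  have hflip : #{z : Fin n × Fin n | z.1 < z.2 ∧ σ.symm z.2 < σ.symm z.1 ∧ u z.1 < u z.2} =
      #{z : Fin n × Fin n | z.2 < z.1 ∧ σ.symm z.1 < σ.symm z.2 ∧ u z.2 < u z.1} := by
    refine card_equiv (Equiv.prodComm _ _) fun z => ?_
    simp
  rw [hlen, hflip, len]
  simp only [card_filter, ← sum_add_distrib]
  refine sum_congr rfl fun z _ => ?_
  have hinj : z.1 ≠ z.2 → σ.symm z.1 ≠ σ.symm z.2 := fun h => σ.symm.injective.ne h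
  split_ifs <;> grind

theorem card_filter_reversed_by_swap {p q : Fin n} (hpq : p < q) (R : Fin n → Fin n → Prop)
    [DecidableRel R] :
    #{z : Fin n × Fin n | z.1 < z.2 ∧ swap p q z.2 < swap p q z.1 ∧ R z.1 z.2} =
      #{j ∈ Ioc p q | R p j} + #{j ∈ Ioo p q | R j q} := by
  have hF : ({z : Fin n × Fin n | z.1 < z.2 ∧ swap p q z.2 < swap p q z.1 ∧ R z.1 z.2} :
      Finset _) = {p} ×ˢ {j ∈ Ioc p q | R p j} ∪ {j ∈ Ioo p q | R j q} ×ˢ {q} := by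
    ext ⟨x, y⟩
    simp only [mem_filter, mem_univ, true_and, ← and_assoc, lt_and_swap_apply_lt_iff hpq, mem_union,
      mem_product, mem_singleton, mem_Ioc, mem_Ioo]
    grind
  have hdisj : Disjoint ({p} ×ˢ {j ∈ Ioc p q | R p j}) ({j ∈ Ioo p q | R j q} ×ˢ {q}) := by
    refine disjoint_left.2 fun z h1 h2 => ?_
    simp only [mem_product, mem_singleton, mem_filter, mem_Ioo] at h1 h2
    exact h2.1.1.1.ne' h1.1
  rw [hF, card_union_of_disjoint hdisj, card_product, card_product, card_singleton,
    card_singleton, one_mul, mul_one]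

theorem len_mul_swap_add {p q : Fin n} (hpq : p < q) (u : Perm (Fin n)) :
    len (u * swap p q) + #{j ∈ Ioc p q | u j < u p} + #{j ∈ Ioo p q | u q < u j} =
      len u + #{j ∈ Ioc p q | u p < u j} + #{j ∈ Ioo p q | u j < u q} := by
  have h := len_mul_add_card u (swap p q)
  rw [symm_swap, card_filter_reversed_by_swap hpq (fun x y => u y < u x),
    card_filter_reversed_by_swap hpq (fun x y => u x < u y)] at h
  omega

theorem lt_of_len_mul_swap_eq_add_one {p q : Fin n} (hpq : p < q) {u : Perm (Fin n)}
    (h : len (u * swap p q) = len u + 1) :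
    u p < u q ∧ ∀ j, p < j → j < q → u j < u q → u j < u p := by
  have key := len_mul_swap_add hpq u
  rw [h] at key
  have hlt : u p < u q := by
    by_contra hle
    have hqp : u q < u p := lt_of_le_of_ne (not_lt.1 hle) (u.injective.ne hpq.ne')
    have h1 : #{j ∈ Ioc p q | u p < u j} ≤ #{j ∈ Ioo p q | u q < u j} := by
      refine card_le_card fun j hj => ?_
      simp only [mem_filter, mem_Ioc, mem_Ioo] at hj ⊢
      refine ⟨⟨hj.1.1, lt_of_le_of_ne hj.1.2 ?_⟩, hqp.trans hj.2⟩
      rintro rfl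
      exact hle hj.2
    have h2 : #{j ∈ Ioo p q | u j < u q} ≤ #{j ∈ Ioc p q | u j < u p} := by
      refine card_le_card fun j hj => ?_
      simp only [mem_filter, mem_Ioc, mem_Ioo] at hj ⊢
      exact ⟨⟨hj.1.1, hj.1.2.le⟩, hj.2.trans hqp⟩
    omega
  refine ⟨hlt, fun j hpj hjq hjuq => ?_⟩
  by_contra hjup
  have hpj' : u p < u j := lt_of_le_of_ne (not_lt.1 hjup) (u.injective.ne hpj.ne)
  have h1 : #{j ∈ Ioo p q | u q < u j} + 1 ≤ #{j ∈ Ioc p q | u p < u j} := by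
    rw [← card_insert_of_notMem (s := {j ∈ Ioo p q | u q < u j}) (a := q) (by simp)]
    refine card_le_card fun x hx => ?_
    simp only [mem_insert, mem_filter, mem_Ioc, mem_Ioo] at hx ⊢
    rcases hx with rfl | hx
    · exact ⟨⟨hpq, le_rfl⟩, hlt⟩
    · exact ⟨⟨hx.1.1, hx.1.2.le⟩, hlt.trans hx.2⟩
  have h2 : #{j ∈ Ioc p q | u j < u p} + 1 ≤ #{j ∈ Ioo p q | u j < u q} := by
    rw [← card_insert_of_notMem (s := {j ∈ Ioc p q | u j < u p}) (a := j)
      (by simp [hpj'.not_gt])]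
    refine card_le_card fun x hx => ?_
    simp only [mem_insert, mem_filter, mem_Ioc, mem_Ioo] at hx ⊢
    rcases hx with rfl | hx
    · exact ⟨⟨hpj, hjq⟩, hjuq⟩
    · refine ⟨⟨hx.1.1, lt_of_le_of_ne hx.1.2 ?_⟩, hx.2.trans hlt⟩
      rintro rfl
      exact hx.2.not_gt hlt
  omega

theorem rkIic_mul_swap_add {p q : Fin n} (hpq : p < q) {u : Perm (Fin n)} (hu : u p < u q)
    (c d : Fin n) :
    rkIic (u * swap p q) c d + (if p ≤ c ∧ c < q ∧ u p ≤ d ∧ d < u q then 1 else 0) =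
      rkIic u c d := by
  have hsplit : ∀ w : Perm (Fin n), rkIic w c d =
      (∑ j ∈ {p, q}, if j ≤ c ∧ w j ≤ d then 1 else 0) +
        ∑ j ∈ ({p, q} : Finset (Fin n))ᶜ, if j ≤ c ∧ w j ≤ d then 1 else 0 := fun w => by
    rw [rkIic, card_filter, sum_add_sum_compl]
  have hrest : ∑ j ∈ ({p, q} : Finset (Fin n))ᶜ, (if j ≤ c ∧ (u * swap p q) j ≤ d then 1 else 0)
      = ∑ j ∈ ({p, q} : Finset (Fin n))ᶜ, if j ≤ c ∧ u j ≤ d then 1 else 0 := by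
    refine sum_congr rfl fun j hj => ?_
    simp only [mem_compl, mem_insert, mem_singleton, not_or] at hj
    rw [Perm.mul_apply, swap_apply_of_ne_of_ne hj.1 hj.2]
  rw [hsplit, hsplit u, hrest, sum_pair hpq.ne, sum_pair hpq.ne]
  simp only [Perm.mul_apply, swap_apply_left, swap_apply_right]
  split_ifs <;> omega

theorem ite_exists_fin_succ_eq {v : Perm (Fin n)} {a c d : Fin n} {k : ℕ}
    {i : Fin (k + 2) → Fin n} (hmono : Monotone i) (hanti : Antitone (v ∘ i))
    (h0 : v (i 0) < v a) :
    (if ∃ ℓ, i ℓ ≤ c ∧ c < a ∧ v (i ℓ) ≤ d ∧ d < v a then 1 else 0) =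
      (if i (Fin.last (k + 1)) ≤ c ∧ c < a ∧ v (i (Fin.last (k + 1))) ≤ d ∧
          d < v (i (Fin.last k).castSucc) then 1 else 0) +
        (if ∃ ℓ : Fin (k + 1), i ℓ.castSucc ≤ c ∧ c < a ∧ v (i ℓ.castSucc) ≤ d ∧ d < v a
          then 1 else 0) := by
  rw [if_congr Fin.exists_fin_succ' rfl rfl]
  by_cases hP : i (Fin.last (k + 1)) ≤ c ∧ c < a ∧ v (i (Fin.last (k + 1))) ≤ d ∧
      d < v (i (Fin.last k).castSucc)
  · have hE' : ¬∃ ℓ : Fin (k + 1), i ℓ.castSucc ≤ c ∧ c < a ∧ v (i ℓ.castSucc) ≤ d ∧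
        d < v a := fun ⟨ℓ, _, _, hℓd, _⟩ =>
      (hanti (Fin.castSucc_le_castSucc_iff.2 (Fin.le_last ℓ))).not_gt (hℓd.trans_lt hP.2.2.2)
    have hda : d < v a := hP.2.2.2.trans_le ((hanti (Fin.zero_le _)).trans h0.le)
    rw [if_pos (Or.inr ⟨hP.1, hP.2.1, hP.2.2.1, hda⟩), if_pos hP, if_neg hE']
  · rw [if_neg hP, zero_add]
    refine if_congr ⟨?_, Or.inl⟩ rfl rfl
    rintro (hE' | ⟨hLc, hca, hLd, hda⟩)
    · exact hE'
    · exact ⟨Fin.last k, (hmono (Fin.castSucc_lt_last _).le).trans hLc, hca,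
        not_lt.1 fun h => hP ⟨hLc, hca, hLd, h⟩, hda⟩

theorem rkIic_cycle_add (v : Perm (Fin n)) {a : Fin n} {k : ℕ} {i : Fin (k + 1) → Fin n}
    (hmono : StrictMono i) (hia : ∀ ℓ, i ℓ < a) (hanti : StrictAnti (v ∘ i))
    (h0 : v (i 0) < v a) {w : Perm (Fin n)} (hwa : w a = v (i (Fin.last k)))
    (hw0 : w (i 0) = v a) (hws : ∀ ℓ : Fin k, w (i ℓ.succ) = v (i ℓ.castSucc))
    (hwo : ∀ j, j ≠ a → (∀ ℓ, j ≠ i ℓ) → w j = v j) (c d : Fin n) :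
    rkIic w c d + (if ∃ ℓ, i ℓ ≤ c ∧ c < a ∧ v (i ℓ) ≤ d ∧ d < v a then 1 else 0) =
      rkIic v c d := by
  induction k generalizing w with
  | zero =>
    have hw : w = v * swap (i 0) a := by
      refine Equiv.ext fun j => ?_
      rw [Perm.mul_apply, swap_apply_def]
      split_ifs with hj hj'
      · rw [hj, hw0]
      · rw [hj', hwa]; rfl
      · exact hwo j hj' (Fin.forall_fin_one.2 hj)
    subst hw
    rw [if_congr Fin.exists_fin_one rfl rfl]
    exact rkIic_mul_swap_add (hia 0) h0 c d
  | succ k ih =>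
    -- `w'` is the cycle through `a` and `i` restricted to its first `k + 1` entries
    set w' := w * swap (i (Fin.last (k + 1))) a with hw'
    have hiL : ∀ ℓ : Fin (k + 1), i ℓ.castSucc ≠ i (Fin.last (k + 1)) := fun ℓ =>
      hmono.injective.ne (Fin.castSucc_lt_last ℓ).ne
    have hw'i : ∀ ℓ : Fin (k + 1), w' (i ℓ.castSucc) = w (i ℓ.castSucc) := fun ℓ => by
      rw [hw', Perm.mul_apply, swap_apply_of_ne_of_ne (hiL ℓ) (hia _).ne]
    have hw'a : w' a = v (i (Fin.last k).castSucc) := by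
      rw [hw', Perm.mul_apply, swap_apply_right]
      exact hws (Fin.last k)
    have hw'L : w' (i (Fin.last (k + 1))) = v (i (Fin.last (k + 1))) := by
      rw [hw', Perm.mul_apply, swap_apply_left, hwa]
    have hprev := ih (i := fun ℓ => i ℓ.castSucc) (hmono.comp Fin.strictMono_castSucc)
      (fun ℓ => hia _) (hanti.comp_strictMono Fin.strictMono_castSucc) h0 (w := w') hw'a
      (by rw [hw'i]; exact hw0) (fun ℓ => by rw [hw'i, ← Fin.succ_castSucc, hws])
      (fun j hja hj => by
        by_cases hjL : j = i (Fin.last (k + 1))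
        · rw [hjL, hw'L]
        · rw [hw', Perm.mul_apply, swap_apply_of_ne_of_ne hjL hja]
          exact hwo j hja (Fin.lastCases hjL hj))
    have hlast := rkIic_mul_swap_add (hia (Fin.last (k + 1))) (u := w')
      (by rw [hw'L, hw'a]; exact hanti (Fin.castSucc_lt_last _)) c d
    rw [hw', mul_swap_mul_self, ← hw', hw'L, hw'a] at hlast
    rw [ite_exists_fin_succ_eq hmono.monotone hanti.antitone h0]
    omega

theorem inf'_add_ite_exists {ι : Type*} [Fintype ι] [Nonempty ι] {P : ι → Prop}
    [DecidablePred P] [Decidable (∃ ℓ, P ℓ)] {f : ι → ℕ} {r : ℕ}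
    (hf : ∀ ℓ, f ℓ + (if P ℓ then 1 else 0) = r) :
    univ.inf' univ_nonempty f + (if ∃ ℓ, P ℓ then 1 else 0) = r := by
  by_cases hP : ∃ ℓ, P ℓ
  · obtain ⟨ℓ, hℓ⟩ := hP
    have hle : univ.inf' univ_nonempty f ≤ f ℓ := inf'_le _ (mem_univ ℓ)
    have hge : r - 1 ≤ univ.inf' univ_nonempty f :=
      le_inf' _ _ fun m _ => by have := hf m; split_ifs at this <;> omega
    have := hf ℓ
    rw [if_pos hℓ] at this
    rw [if_pos ⟨ℓ, hℓ⟩]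
    omega
  · simp only [not_exists] at hP
    have hconst : f = fun _ => r := funext fun ℓ => by simpa [hP ℓ] using hf ℓ
    simp [hconst, hP]

/-- The join lemma: with `U = {i 0 < i 1 < ⋯ < i k} ⊆ [a−1]` a nonempty set such that
each `v·t_{iℓ,a}` is a Bruhat cover of `v`, the permutation `w_U = v·(a i_k ⋯ i_1)`
(characterized by its values) satisfies
`rk_{w_U}(c,d) = min {rk_{v·t_{iℓ,a}}(c,d)}` for all `c,d`; i.e. `w_U` is the
join of the `v·t_{iℓ,a}` in the ASM lattice. -/
theorem stmt_8 (n k : ℕ) (v : Equiv.Perm (Fin n)) (a : Fin n)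
    (i : Fin (k + 1) → Fin n) (hmono : StrictMono i)
    (hia : ∀ ℓ, i ℓ < a)
    (hcov : ∀ ℓ, bruhatLE v (v * Equiv.swap (i ℓ) a) ∧
      v * Equiv.swap (i ℓ) a ≠ v ∧ len (v * Equiv.swap (i ℓ) a) = len v + 1)
    (wU : Equiv.Perm (Fin n))
    (hwa : wU a = v (i (Fin.last k)))
    (hw0 : wU (i 0) = v a)
    (hws : ∀ ℓ : Fin k, wU (i ℓ.succ) = v (i ℓ.castSucc))
    (hwo : ∀ j : Fin n, j ≠ a → (∀ ℓ, j ≠ i ℓ) → wU j = v j) :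
    ∀ c d : Fin n,
      rkIic wU c d =
        Finset.univ.inf' Finset.univ_nonempty
          (fun ℓ : Fin (k + 1) => rkIic (v * Equiv.swap (i ℓ) a) c d) := by
  intro c d
  have hcover ℓ := lt_of_len_mul_swap_eq_add_one (hia ℓ) (hcov ℓ).2.2
  have hanti : StrictAnti (v ∘ i) := fun ℓ ℓ' h =>
    (hcover ℓ).2 (i ℓ') (hmono h) (hia ℓ') (hcover ℓ').1
  have hw := rkIic_cycle_add v hmono hia hanti (hcover 0).1 hwa hw0 hws hwo c d
  have hinf := inf'_add_ite_exists fun ℓ => rkIic_mul_swap_add (hia ℓ) (hcover ℓ).1 c d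
  omega
end

section
/- Under the same hypotheses as the join lemma (v ∈ S_n, (a,b) with v(a)=b, nonempty U = {i_1 < ... < i_k} ⊆ [a−1] with each v·t_{i,a} a Bruhat cover of v with v(i_1) > v(i_2) > ... > v(i_k), and all v(i) < b), the permutation w_U = v·(a i_k ... i_1) has Coxeter length ℓ(w_U) = ℓ(v) + 1 + (#U − 1) = ℓ(v) + #U. -/
open Equiv Finset

namespace Equiv.Perm

variable {α : Type*} [LinearOrder α]

def orderedPairMap (σ : Perm α) (p : α × α) : α × α :=
  if σ p.1 < σ p.2 then (σ p.1, σ p.2) else p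

variable {σ : Perm α} {p : α × α}

lemma orderedPairMap_lt (hp : p.1 < p.2) :
    (σ.orderedPairMap p).1 < (σ.orderedPairMap p).2 := by
  unfold orderedPairMap
  split_ifs with h
  exacts [h, hp]

lemma orderedPairMap_orderedPairMap (hσ : Function.Involutive σ) (hp : p.1 < p.2) :
    σ.orderedPairMap (σ.orderedPairMap p) = p := by
  unfold orderedPairMap
  split_ifs with h h' <;> simp_all [hσ p.1, hσ p.2]

end Equiv.Perm

lemma swap_lt_swap_cases {α : Type*} [LinearOrder α] {i a p q : α} (hia : i < a) (hpq : p < q)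
    (h : swap i a q < swap i a p) :
    p = i ∧ q = a ∨ p = i ∧ i < q ∧ q < a ∨ q = a ∧ i < p ∧ p < a := by
  simp only [swap_apply_def] at h
  split_ifs at h <;> grind

section Inversions

variable {n : ℕ}

def inversions (u : Perm (Fin n)) : Finset (Fin n × Fin n) :=
  univ.filter fun p => p.1 < p.2 ∧ u p.2 < u p.1

lemma len_eq_card_inversions (u : Perm (Fin n)) : len u = #(inversions u) := rfl

lemma mem_inversions {u : Perm (Fin n)} {p : Fin n × Fin n} :
    p ∈ inversions u ↔ p.1 < p.2 ∧ u p.2 < u p.1 := by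
  simp [inversions]

variable {u : Perm (Fin n)} {i a : Fin n}

lemma mem_inversions_mul_swap_iff (hia : i < a) (hu : u i < u a)
    (hcov : ∀ m, i < m → m < a → ¬(u i < u m ∧ u m < u a))
    {p : Fin n × Fin n} (hp : p.1 < p.2) (hpia : p ≠ (i, a)) :
    p ∈ inversions (u * swap i a) ↔ (swap i a).orderedPairMap p ∈ inversions u := by
  have hout : ∀ m, i < m → m < a → u m < u i ∨ u a < u m := fun m him hma => by
    have := hcov m him hma
    have := u.injective.ne him.ne'
    have := u.injective.ne hma.ne
    grind
  unfold Perm.orderedPairMap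
  split_ifs with h
  · simp [mem_inversions, hp, h]
  · have hrev : swap i a p.2 < swap i a p.1 :=
      lt_of_le_of_ne (not_lt.1 h) ((swap i a).injective.ne hp.ne')
    simp only [mem_inversions, hp, true_and, Perm.mul_apply]
    rcases swap_lt_swap_cases hia hp hrev with ⟨h1, h2⟩ | ⟨h1, hi2, h2a⟩ | ⟨h2, hi1, h1a⟩
    · exact absurd (Prod.ext h1 h2) hpia
    · rw [h1, swap_apply_left, swap_apply_of_ne_of_ne hi2.ne' h2a.ne]
      rcases hout _ hi2 h2a with h | h
      · exact iff_of_true (h.trans hu) h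
      · exact iff_of_false h.not_gt (h.trans' hu).not_gt
    · rw [h2, swap_apply_right, swap_apply_of_ne_of_ne hi1.ne' h1a.ne]
      rcases hout _ hi1 h1a with h | h
      · exact iff_of_false h.not_gt (h.trans hu).not_gt
      · exact iff_of_true (h.trans' hu) h

lemma len_mul_swap_of_cover (hia : i < a) (hu : u i < u a)
    (hcov : ∀ m, i < m → m < a → ¬(u i < u m ∧ u m < u a)) :
    len (u * swap i a) = len u + 1 := by
  have hinv : Function.Involutive (swap i a) := swap_apply_self i a
  have hfix : (swap i a).orderedPairMap (i, a) = (i, a) := by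
    simp [Perm.orderedPairMap, hia.not_gt]
  have hmem : (i, a) ∈ inversions (u * swap i a) := by simp [mem_inversions, hia, hu]
  have hbij : #((inversions (u * swap i a)).erase (i, a)) = #(inversions u) := by
    apply card_nbij' (swap i a).orderedPairMap (swap i a).orderedPairMap
    · intro p hp
      obtain ⟨hpia, hp⟩ := mem_erase.1 hp
      exact (mem_inversions_mul_swap_iff hia hu hcov (mem_inversions.1 hp).1 hpia).1 hp
    · intro q hq
      have hq' := (mem_inversions.1 hq).1
      have hback := Perm.orderedPairMap_orderedPairMap hinv hq'
      have hne : (swap i a).orderedPairMap q ≠ (i, a) := by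
        rintro h
        rw [← hback, h, hfix] at hq
        exact (mem_inversions.1 hq).2.not_gt hu
      refine mem_erase.2 ⟨hne, ?_⟩
      rwa [mem_inversions_mul_swap_iff hia hu hcov (Perm.orderedPairMap_lt hq') hne, hback]
    · intro p hp
      exact Perm.orderedPairMap_orderedPairMap hinv (mem_inversions.1 (mem_of_mem_erase hp)).1
    · intro q hq
      exact Perm.orderedPairMap_orderedPairMap hinv (mem_inversions.1 hq).1
  rw [len_eq_card_inversions, len_eq_card_inversions, ← hbij, card_erase_add_one hmem]

end Inversions

/-- `w = v · (a iₖ ⋯ i₁ i₀)`, described pointwise. -/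
structure IsMulCycle {n k : ℕ} (v w : Perm (Fin n)) (a : Fin n) (i : Fin (k + 1) → Fin n) :
    Prop where
  apply_a : w a = v (i (Fin.last k))
  apply_zero : w (i 0) = v a
  apply_succ : ∀ ℓ : Fin k, w (i ℓ.succ) = v (i ℓ.castSucc)
  apply_of_ne : ∀ j, j ≠ a → (∀ ℓ, j ≠ i ℓ) → w j = v j

namespace IsMulCycle

variable {n : ℕ} {v w : Perm (Fin n)} {a : Fin n}

lemma eq_mul_swap {i : Fin 1 → Fin n} (h : IsMulCycle v w a i) : w = v * swap (i 0) a := by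
  ext x
  rw [Perm.mul_apply, swap_apply_def]
  split_ifs with hx0 hxa
  · rw [hx0, h.apply_zero]
  · rw [hxa, h.apply_a, Fin.last_zero]
  · exact congrArg _ (h.apply_of_ne x hxa fun ℓ => Fin.fin_one_eq_zero ℓ ▸ hx0)

lemma mul_swap_last {k : ℕ} {i : Fin (k + 2) → Fin n} (hmono : StrictMono i)
    (hia : ∀ ℓ, i ℓ < a) (h : IsMulCycle v w a i) :
    IsMulCycle v (w * swap (i (Fin.last (k + 1))) a) a fun ℓ => i ℓ.castSucc := by
  set t := i (Fin.last (k + 1))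
  have hne : ∀ ℓ : Fin (k + 1), i ℓ.castSucc ≠ t := fun ℓ => (hmono (Fin.castSucc_lt_last ℓ)).ne
  have hfix : ∀ ℓ : Fin (k + 1), (w * swap t a) (i ℓ.castSucc) = w (i ℓ.castSucc) := fun ℓ =>
    congrArg w (swap_apply_of_ne_of_ne (hne ℓ) (hia _).ne)
  refine ⟨?_, ?_, fun ℓ => ?_, fun j hja hji => ?_⟩
  · rw [Perm.mul_apply, swap_apply_right, ← h.apply_succ, Fin.succ_last]
  · rw [hfix, Fin.castSucc_zero, h.apply_zero]
  · rw [hfix, ← Fin.succ_castSucc, h.apply_succ]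
  · by_cases hjt : j = t
    · rw [hjt, Perm.mul_apply, swap_apply_left, h.apply_a]
    · rw [Perm.mul_apply, swap_apply_of_ne_of_ne hjt hja]
      exact h.apply_of_ne j hja fun ℓ => Fin.lastCases hjt hji ℓ

end IsMulCycle

theorem len_of_isMulCycle {n : ℕ} {v : Perm (Fin n)} {a : Fin n} {k : ℕ}
    {i : Fin (k + 1) → Fin n} {w : Perm (Fin n)} (hmono : StrictMono i) (hia : ∀ ℓ, i ℓ < a)
    (hanti : ∀ ℓ ℓ', ℓ < ℓ' → v (i ℓ') < v (i ℓ)) (hb : ∀ ℓ, v (i ℓ) < v a)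
    (hcov : ∀ ℓ m, i ℓ < m → m < a → ¬(v (i ℓ) < v m ∧ v m < v a))
    (h : IsMulCycle v w a i) : len w = len v + (k + 1) := by
  induction k generalizing w with
  | zero => rw [h.eq_mul_swap, len_mul_swap_of_cover (hia 0) (hb 0) (hcov 0)]
  | succ k ih =>
    set L := Fin.last (k + 1)
    set w' := w * swap (i L) a
    have h' := h.mul_swap_last hmono hia
    have hw' : w = w' * swap (i L) a := by rw [mul_swap_mul_self]
    have hprev : v (i (Fin.last k).castSucc) < v a := hb _
    have hw'_of_gt : ∀ m, i L ≤ m → m ≠ a → w' m = v m := fun m hm hma =>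
      h'.apply_of_ne m hma fun ℓ => ((hmono (Fin.castSucc_lt_last ℓ)).trans_le hm).ne'
    have hcov' : ∀ m, i L < m → m < a → ¬(w' (i L) < w' m ∧ w' m < w' a) := by
      rintro m hLm hma ⟨h1, h2⟩
      rw [hw'_of_gt _ le_rfl (hia L).ne, hw'_of_gt m hLm.le hma.ne] at h1
      rw [hw'_of_gt m hLm.le hma.ne, h'.apply_a] at h2
      exact hcov L m hLm hma ⟨h1, h2.trans hprev⟩
    have hu : w' (i L) < w' a := by
      rw [hw'_of_gt _ le_rfl (hia L).ne, h'.apply_a]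
      exact hanti _ _ (Fin.castSucc_lt_last _)
    rw [hw', len_mul_swap_of_cover (hia L) hu hcov',
      ih (hmono.comp Fin.strictMono_castSucc) (fun ℓ => hia _)
        (fun ℓ ℓ' hlt => hanti _ _ (Fin.castSucc_lt_castSucc_iff.2 hlt)) (fun ℓ => hb _)
        (fun ℓ => hcov _) h', add_assoc]

/-- Under the hypotheses of the join lemma (`U = {i 0 < ⋯ < i k} ⊆ [a−1]` nonempty,
`v(i 0) > v(i 1) > ⋯ > v(i k)`, each `v(iℓ) < v(a)`, and each `v·t_{iℓ,a}` a Bruhat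
cover of `v`, i.e. no `m` with `iℓ < m < a` and `v(iℓ) < v(m) < v(a)`), the
permutation `w_U = v·(a i_k ⋯ i_1)` has length `ℓ(w_U) = ℓ(v) + #U`. -/
theorem stmt_9 (n k : ℕ) (v : Equiv.Perm (Fin n)) (a : Fin n)
    (i : Fin (k + 1) → Fin n) (hmono : StrictMono i)
    (hia : ∀ ℓ, i ℓ < a)
    (hanti : ∀ ℓ ℓ' : Fin (k + 1), ℓ < ℓ' → v (i ℓ') < v (i ℓ))
    (hb : ∀ ℓ, v (i ℓ) < v a)
    (hcov : ∀ ℓ, ∀ m : Fin n, i ℓ < m → m < a → ¬(v (i ℓ) < v m ∧ v m < v a))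
    (wU : Equiv.Perm (Fin n))
    (hwa : wU a = v (i (Fin.last k)))
    (hw0 : wU (i 0) = v a)
    (hws : ∀ ℓ : Fin k, wU (i ℓ.succ) = v (i ℓ.castSucc))
    (hwo : ∀ j : Fin n, j ≠ a → (∀ ℓ, j ≠ i ℓ) → wU j = v j) :
    len wU = len v + (k + 1) :=
  len_of_isMulCycle hmono hia hanti hb hcov ⟨hwa, hw0, hws, hwo⟩
end

section
/- Let w ∈ S_n, let (a,b) be a lower outside corner of D(w) with rk_w(a,b) ≥ 1, let v = w·t_{a,w⁻¹(b)}, and let π be the bigrassmannian permutation with Ess(π) = {(a−1,b−1)} and rk_π(a−1,b−1) = rk_w(a,b) − 1. Then the set Perm(v ∨ π) of minimal permutations above the ASM A = v ∨ π equals Φ(w,(a,b)) = {v·t_{i,a} : i ∈ [a−1], v·t_{i,a} > v, ℓ(v·t_{i,a}) = ℓ(w)}, and min{ℓ(u) : u ∈ Perm(A)} = ℓ(w). -/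
/-!
Write `v = w·t_{a,w⁻¹(b)}`. As `(a,b) ∈ D(w)`, `rk_w(a+1,b+1) = rk_v(a,b)`, so by Fulton's
essential set criterion `u ≥ π` exactly when `rk_u(a,b) < rk_v(a,b)`, and `Perm(v ∨ π)` is the set
of minimal `u ≥ v` that lose rank at `(a,b)`. Every such `u` lies above some `v·t_{i,a}` where
`(i, v(i))` is a dot of `v` northwest of `(a,b)` with no dot of `v` strictly between the two
(take the dot of largest value in the rows where `u` has not yet lost rank in column `b`), and two
such transpositions are comparable only if they coincide. The length formula
`ℓ(v·t_{i,j}) = ℓ(v) + 1 + 2·#{dots of v strictly between (i, v i) and (j, v j)}` identifies these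
with `Φ(w,(a,b))`, and because `(a,b)` is a lower outside corner it also gives `ℓ(w) = ℓ(v) + 1`.
-/

/-- Rank function with natural number arguments (1-indexed):
`rkN u c d = #{i ∈ [c] : u(i) ∈ [d]}`. -/
def rkN {n : ℕ} (u : Equiv.Perm (Fin n)) (c d : ℕ) : ℕ :=
  (Finset.univ.filter (fun i : Fin n => (i : ℕ) < c ∧ (u i : ℕ) < d)).card

/-- The Bruhat/ASM order via rank functions: `u ≤ u'` iff `rk_{u'} ≤ rk_u` entrywise. -/
def permLE {n : ℕ} (u u' : Equiv.Perm (Fin n)) : Prop :=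
  ∀ c d : ℕ, rkN u' c d ≤ rkN u c d

/-- Permutations weakly above the join `v ∨ π` in the ASM lattice. -/
def aboveJoin {n : ℕ} (v π u : Equiv.Perm (Fin n)) : Prop :=
  permLE v u ∧ permLE π u

/-- `Perm(v ∨ π)`: the minimal permutations above the ASM `v ∨ π`. -/
def PermOfJoin {n : ℕ} (v π : Equiv.Perm (Fin n)) : Set (Equiv.Perm (Fin n)) :=
  {u | aboveJoin v π u ∧ ∀ u', aboveJoin v π u' → permLE u' u → u' = u}


open Finset
open Equiv (swap)

theorem sum_add_add_eq_of_eq_off_pair {ι M : Type*} [Fintype ι] [DecidableEq ι]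
    [AddCommMonoid M] {f g : ι → M} {i j : ι} (hij : i ≠ j)
    (h : ∀ k, k ≠ i → k ≠ j → f k = g k) :
    ∑ k, f k + (g i + g j) = ∑ k, g k + (f i + f j) := by
  have hrest : ∑ k ∈ {i, j}ᶜ, f k = ∑ k ∈ {i, j}ᶜ, g k := sum_congr rfl fun k hk => by
    simp only [mem_compl, mem_insert, mem_singleton, not_or] at hk
    exact h k hk.1 hk.2
  rw [← sum_add_sum_compl {i, j} f, ← sum_add_sum_compl {i, j} g, sum_pair hij, sum_pair hij,
    hrest]
  abel

section Rank

variable {n : ℕ}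

def dotsIn (v : Equiv.Perm (Fin n)) (c c' d d' : ℕ) : Finset (Fin n) :=
  univ.filter fun k => c ≤ (k : ℕ) ∧ (k : ℕ) < c' ∧ d ≤ (v k : ℕ) ∧ (v k : ℕ) < d'

theorem rkN_eq_sum (u : Equiv.Perm (Fin n)) (c d : ℕ) :
    rkN u c d = ∑ k : Fin n, if (k : ℕ) < c ∧ (u k : ℕ) < d then 1 else 0 :=
  card_filter _ _

theorem rkN_inv (u : Equiv.Perm (Fin n)) (c d : ℕ) : rkN u⁻¹ d c = rkN u c d := by
  rw [rkN_eq_sum, rkN_eq_sum, ← Equiv.sum_comp u]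
  simp [and_comm]

@[simp]
theorem rkN_zero_left (u : Equiv.Perm (Fin n)) (d : ℕ) : rkN u 0 d = 0 := by
  simp [rkN]

@[simp]
theorem rkN_zero_right (u : Equiv.Perm (Fin n)) (c : ℕ) : rkN u c 0 = 0 := by
  simp [rkN]

theorem rkN_mono_left (u : Equiv.Perm (Fin n)) {c c' : ℕ} (h : c ≤ c') (d : ℕ) :
    rkN u c d ≤ rkN u c' d :=
  card_le_card fun k => by simp only [mem_filter, mem_univ, true_and]; omega

theorem rkN_mono_right (u : Equiv.Perm (Fin n)) (c : ℕ) {d d' : ℕ} (h : d ≤ d') :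
    rkN u c d ≤ rkN u c d' := by
  rw [← rkN_inv, ← rkN_inv u]
  exact rkN_mono_left _ h _

theorem rkN_succ_left (u : Equiv.Perm (Fin n)) (r : Fin n) (d : ℕ) :
    rkN u (r + 1) d = rkN u r d + if (u r : ℕ) < d then 1 else 0 := by
  have hrest : ∑ k ∈ {r}ᶜ, (if (k : ℕ) < r + 1 ∧ (u k : ℕ) < d then 1 else 0) =
      ∑ k ∈ {r}ᶜ, (if (k : ℕ) < r ∧ (u k : ℕ) < d then 1 else 0) :=
    sum_congr rfl fun k hk => by
      have : k ≠ r := by simpa using hk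
      split_ifs <;> omega
  rw [rkN_eq_sum, rkN_eq_sum, Fintype.sum_eq_add_sum_compl r, Fintype.sum_eq_add_sum_compl r,
    hrest]
  split_ifs <;> omega

theorem rkN_succ_right (u : Equiv.Perm (Fin n)) (c : ℕ) (s : Fin n) :
    rkN u c (s + 1) = rkN u c s + if ((u⁻¹ s : Fin n) : ℕ) < c then 1 else 0 := by
  rw [← rkN_inv, ← rkN_inv u, rkN_succ_left]

theorem rkN_succ_left_of_le (u : Equiv.Perm (Fin n)) (r : Fin n) {d : ℕ} (h : d ≤ u r) :
    rkN u (r + 1) d = rkN u r d := by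
  rw [rkN_succ_left, if_neg (by omega), add_zero]

theorem rkN_succ_right_of_le (u : Equiv.Perm (Fin n)) {c : ℕ} (s : Fin n) (h : c ≤ u⁻¹ s) :
    rkN u c (s + 1) = rkN u c s := by
  rw [rkN_succ_right, if_neg (by omega), add_zero]

theorem rkN_eq_of_le_left (u u' : Equiv.Perm (Fin n)) {c : ℕ} (h : n ≤ c) (d : ℕ) :
    rkN u c d = rkN u' c d := by
  have key (x : Equiv.Perm (Fin n)) : rkN x c d = ∑ k : Fin n, if (k : ℕ) < d then 1 else 0 := by
    rw [rkN_eq_sum, ← Equiv.sum_comp x (fun k : Fin n => if (k : ℕ) < d then 1 else 0)]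
    exact sum_congr rfl fun k _ => by simp [k.isLt.trans_le h]
  rw [key, key]

theorem rkN_eq_of_le_right (u u' : Equiv.Perm (Fin n)) (c : ℕ) {d : ℕ} (h : n ≤ d) :
    rkN u c d = rkN u' c d := by
  rw [← rkN_inv, ← rkN_inv u', rkN_eq_of_le_left _ _ h]

theorem rkN_add_rkN_eq_add_card_dotsIn (v : Equiv.Perm (Fin n)) {c c' d d' : ℕ}
    (hc : c ≤ c') (hd : d ≤ d') :
    rkN v c' d' + rkN v c d = rkN v c d' + rkN v c' d + #(dotsIn v c c' d d') := by
  simp only [rkN_eq_sum, dotsIn, card_filter, ← sum_add_distrib]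
  refine sum_congr rfl fun k _ => ?_
  split_ifs <;> omega

theorem permLE.trans {x y z : Equiv.Perm (Fin n)} (hxy : permLE x y) (hyz : permLE y z) :
    permLE x z :=
  fun c d => (hyz c d).trans (hxy c d)

theorem permLE_antisymm {x y : Equiv.Perm (Fin n)} (hxy : permLE x y) (hyx : permLE y x) :
    x = y := by
  have key (r : Fin n) (d : ℕ) : (x r : ℕ) < d ↔ (y r : ℕ) < d := by
    have hx := rkN_succ_left x r d
    have hy := rkN_succ_left y r d
    have := hxy r d; have := hyx r d; have := hxy (r + 1) d; have := hyx (r + 1) d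
    split_ifs at hx hy <;> omega
  ext r
  have := key r (x r + 1)
  have := key r (y r + 1)
  omega

end Rank

section Swap

variable {n : ℕ}

theorem rkN_mul_swap_add (v : Equiv.Perm (Fin n)) {i j : Fin n} (hij : i < j) (hv : v i < v j)
    (c d : ℕ) :
    rkN (v * swap i j) c d
        + (if (i : ℕ) < c ∧ c ≤ j ∧ (v i : ℕ) < d ∧ d ≤ v j then 1 else 0) = rkN v c d := by
  have hpair := sum_add_add_eq_of_eq_off_pair hij.ne
    (f := fun k => if ((swap i j k : Fin n) : ℕ) < c ∧ (v k : ℕ) < d then 1 else 0)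
    (g := fun k => if (k : ℕ) < c ∧ (v k : ℕ) < d then 1 else 0)
    fun k hki hkj => by simp only [Equiv.swap_apply_of_ne_of_ne hki hkj]
  simp only [Equiv.swap_apply_left, Equiv.swap_apply_right] at hpair
  rw [rkN_eq_sum, rkN_eq_sum, ← Equiv.sum_comp (swap i j)]
  simp only [Equiv.Perm.mul_apply, Equiv.swap_apply_self]
  split_ifs at hpair ⊢ <;> omega

theorem permLE_mul_swap (v : Equiv.Perm (Fin n)) {i j : Fin n} (hij : i < j) (hv : v i < v j) :
    permLE v (v * swap i j) := fun c d => by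
  have := rkN_mul_swap_add v hij hv c d
  omega

theorem rkN_mul_swap_lt (v : Equiv.Perm (Fin n)) {i j : Fin n} (hij : i < j) (hv : v i < v j) :
    rkN (v * swap i j) j (v j) < rkN v j (v j) := by
  have := rkN_mul_swap_add v hij hv j (v j)
  rw [if_pos ⟨hij, le_rfl, hv, le_rfl⟩] at this
  omega

-- Lehmer code: `u x` counts the `y` with `u y < u x`, split into `y > x` (inversions) and `y < x`.
theorem len_add_sum_rkN (u : Equiv.Perm (Fin n)) :
    len u + ∑ x : Fin n, rkN u x (u x) = ∑ x, (u x : ℕ) := by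
  have hlen : len u = ∑ x, ∑ y, if x < y ∧ u y < u x then 1 else 0 := by
    rw [len, card_filter, Fintype.sum_prod_type]
  rw [hlen, ← sum_add_distrib]
  refine sum_congr rfl fun x _ => ?_
  have hval : ∑ y, (if u y < u x then 1 else 0) = (u x : ℕ) := by
    rw [Equiv.sum_comp u (fun y => if y < u x then 1 else 0), ← card_filter, filter_gt_eq_Iio,
      Fin.card_Iio]
  rw [rkN_eq_sum, ← sum_add_distrib, ← hval]
  refine sum_congr rfl fun y _ => ?_
  rcases eq_or_ne x y with rfl | hxy
  · simp
  · split_ifs <;> omega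

theorem len_mul_swap (v : Equiv.Perm (Fin n)) {i j : Fin n} (hij : i < j) (hv : v i < v j) :
    len (v * swap i j) = len v + 1 + 2 * #(dotsIn v (i + 1) j (v i + 1) (v j)) := by
  set u := v * swap i j
  have hui : u i = v j := by simp [u]
  have huj : u j = v i := by simp [u]
  have huk (k : Fin n) (hki : k ≠ i) (hkj : k ≠ j) : u k = v k := by
    simp [u, Equiv.swap_apply_of_ne_of_ne hki hkj]
  have hsum : ∑ x, (u x : ℕ) = ∑ x, (v x : ℕ) := Equiv.sum_comp (swap i j) fun x => (v x : ℕ)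
  have hdrop : ∑ x : Fin n, rkN u x (u x) + #(dotsIn v (i + 1) j (v i + 1) (v j)) =
      ∑ x : Fin n, rkN v x (u x) := by
    rw [dotsIn, card_filter, ← sum_add_distrib]
    refine sum_congr rfl fun x _ => ?_
    rw [← rkN_mul_swap_add v hij hv]
    congr 1
    rcases eq_or_ne x i with rfl | hxi
    · simp
    rcases eq_or_ne x j with rfl | hxj
    · simp [huj]
    have := v.injective.ne hxj
    rw [huk x hxi hxj]
    split_ifs <;> omega
  have hpair := sum_add_add_eq_of_eq_off_pair hij.ne (f := fun x : Fin n => rkN v x (u x))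
    (g := fun x : Fin n => rkN v x (v x)) fun k hki hkj => by simp only [huk k hki hkj]
  simp only [hui, huj] at hpair
  have hcorner : dotsIn v i j (v i) (v j) = insert i (dotsIn v (i + 1) j (v i + 1) (v j)) := by
    ext k
    rcases eq_or_ne k i with rfl | hki
    · simp [dotsIn, hij, hv]
    · have := v.injective.ne hki
      simp only [dotsIn, mem_filter, mem_univ, true_and, mem_insert, hki, false_or]
      omega
  have hrect := rkN_add_rkN_eq_add_card_dotsIn v (Fin.le_iff_val_le_val.1 hij.le) hv.le
  rw [hcorner, card_insert_of_notMem (by simp [dotsIn])] at hrect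
  have := len_add_sum_rkN u
  have := len_add_sum_rkN v
  omega

end Swap

section Fulton

variable {n : ℕ} {y u : Equiv.Perm (Fin n)}

theorem rkN_le_of_mem_Dset
    (hess : ∀ p ∈ EssSet y, rkN u (p.1 + 1) (p.2 + 1) ≤ rkN y (p.1 + 1) (p.2 + 1)) :
    ∀ p ∈ Dset y, rkN u (p.1 + 1) (p.2 + 1) ≤ rkN y (p.1 + 1) (p.2 + 1) := by
  intro p
  induction p using WellFoundedGT.induction with
  | _ p ih =>
  intro hp
  by_cases hpE : p ∈ EssSet y
  · exact hess p hpE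
  -- a non-essential cell of the diagram has a diagram neighbour to the south or east,
  -- and moving there does not change the rank of `y`
  obtain ⟨q, hq, hpq, hrank⟩ : ∃ q ∈ Dset y,
      p < q ∧ rkN y (q.1 + 1) (q.2 + 1) = rkN y (p.1 + 1) (p.2 + 1) := by
    by_contra! hno
    refine hpE ⟨hp, fun q hq ⟨hq1, hq2⟩ => ?_, fun q hq ⟨hq1, hq2⟩ => ?_⟩
    · refine hno q hq (Prod.lt_iff.2 (Or.inl ⟨by omega, hq2.ge⟩)) ?_
      rw [rkN_succ_left_of_le y q.1 (by have := hq.1; omega), hq1, hq2]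
    · refine hno q hq (Prod.lt_iff.2 (Or.inr ⟨hq1.ge, by omega⟩)) ?_
      rw [rkN_succ_right_of_le y q.2 (by have := hq.2; omega), hq1, hq2]
  calc rkN u (p.1 + 1) (p.2 + 1)
      ≤ rkN u (q.1 + 1) (q.2 + 1) :=
        (rkN_mono_left u (by have := hpq.le.1; omega) _).trans
          (rkN_mono_right u _ (by have := hpq.le.2; omega))
    _ ≤ rkN y (q.1 + 1) (q.2 + 1) := ih q hpq hq
    _ = rkN y (p.1 + 1) (p.2 + 1) := hrank

/-- Fulton's essential set criterion. -/
theorem permLE_of_essSet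
    (hess : ∀ p ∈ EssSet y, rkN u (p.1 + 1) (p.2 + 1) ≤ rkN y (p.1 + 1) (p.2 + 1)) :
    permLE y u := by
  intro c d
  induction hm : c + d using Nat.strong_induction_on generalizing c d with
  | _ m ih =>
  subst hm
  rcases Nat.eq_zero_or_pos c with rfl | hc
  · simp
  rcases Nat.eq_zero_or_pos d with rfl | hd
  · simp
  by_cases hcn : n ≤ c
  · rw [rkN_eq_of_le_left u y hcn]
  by_cases hdn : n ≤ d
  · rw [rkN_eq_of_le_right u y c hdn]
  obtain ⟨r, rfl⟩ : ∃ r : Fin n, c = r + 1 := ⟨⟨c - 1, by omega⟩, by simp; omega⟩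
  obtain ⟨s, rfl⟩ : ∃ s : Fin n, d = s + 1 := ⟨⟨d - 1, by omega⟩, by simp; omega⟩
  by_cases hr : (y r : ℕ) < s + 1
  · have hy := rkN_succ_left y r (s + 1)
    have hu := rkN_succ_left u r (s + 1)
    have := ih _ (by omega) r (s + 1) rfl
    split_ifs at hy hu <;> omega
  by_cases hs : ((y⁻¹ s : Fin n) : ℕ) < r + 1
  · have hy := rkN_succ_right y (r + 1) s
    have hu := rkN_succ_right u (r + 1) s
    have := ih _ (by omega) (r + 1) s rfl
    split_ifs at hy hu <;> omega
  exact rkN_le_of_mem_Dset hess (r, s)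
    ⟨Nat.lt_of_succ_le (not_lt.1 hr), Nat.lt_of_succ_le (not_lt.1 hs)⟩

theorem permLE_iff_of_essSet_eq {c d : ℕ}
    (hEss : EssSet y = {p : Fin n × Fin n | (p.1 : ℕ) + 1 = c ∧ (p.2 : ℕ) + 1 = d}) :
    permLE y u ↔ rkN u c d ≤ rkN y c d := by
  refine ⟨fun h => h c d, fun h => permLE_of_essSet fun p hp => ?_⟩
  rw [hEss] at hp
  obtain ⟨rfl, rfl⟩ := hp
  exact h

end Fulton

section Covers

variable {n : ℕ} {v u : Equiv.Perm (Fin n)}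

theorem exists_dot_rkN_lt_of_rkN_lt (hvu : permLE v u) {A B : ℕ} (h : rkN u A B < rkN v A B) :
    ∃ i : Fin n, (i : ℕ) < A ∧ (v i : ℕ) < B ∧ dotsIn v (i + 1) A (v i + 1) B = ∅ ∧
      ∀ c d, (i : ℕ) < c → c ≤ A → (v i : ℕ) < d → d ≤ B → rkN u c d < rkN v c d := by
  obtain ⟨c₁, hc₁A, hc₁, hlt⟩ : ∃ c₁ < A, rkN v c₁ B ≤ rkN u c₁ B ∧
      ∀ c, c₁ < c → c ≤ A → rkN u c B < rkN v c B := by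
    set P : ℕ → Prop := fun c => rkN v c B ≤ rkN u c B
    have hP : P (Nat.findGreatest P A) := Nat.findGreatest_spec (Nat.zero_le A) (by simp [P])
    refine ⟨_, (Nat.findGreatest_le A).lt_of_ne fun he => ?_, hP,
      fun c h₁ h₂ => not_le.1 (Nat.findGreatest_is_greatest (P := P) h₁ h₂)⟩
    rw [he] at hP
    exact absurd hP (not_le.2 h)
  have hS : (dotsIn v c₁ A 0 B).Nonempty := by
    have hv := rkN_add_rkN_eq_add_card_dotsIn v hc₁A.le (Nat.zero_le B)
    have hu := rkN_add_rkN_eq_add_card_dotsIn u hc₁A.le (Nat.zero_le B)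
    simp only [rkN_zero_right] at hv hu
    rw [← card_pos]
    omega
  obtain ⟨i, hiS, himax⟩ := (dotsIn v c₁ A 0 B).exists_max_image v hS
  have hi : c₁ ≤ i ∧ (i : ℕ) < A ∧ (v i : ℕ) < B := by simpa [dotsIn] using hiS
  have hmemS (k : Fin n) (h₁ : c₁ ≤ k) (h₂ : (k : ℕ) < A) (h₃ : (v k : ℕ) < B) :
      k ∈ dotsIn v c₁ A 0 B := by
    simp [dotsIn, h₁, h₂, h₃]
  refine ⟨i, hi.2.1, hi.2.2, eq_empty_of_forall_notMem fun k hk => ?_,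
    fun c d hic hcA hid hdB => ?_⟩
  · simp only [dotsIn, mem_filter, mem_univ, true_and] at hk
    have := himax k (hmemS k (by omega) hk.2.1 hk.2.2.2)
    omega
  · by_contra! hcd
    -- `u` loses rank at `(c, B)` but not at `(c₁, B)` nor `(c, d)`: this forces a dot of `v`
    -- in `[c₁, c) × [d, B)`, above the chosen one
    have hv := rkN_add_rkN_eq_add_card_dotsIn v (c := c₁) (c' := c) (d := d) (d' := B)
      (by omega) hdB
    have hu := rkN_add_rkN_eq_add_card_dotsIn u (c := c₁) (c' := c) (d := d) (d' := B)
      (by omega) hdB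
    have := hlt c (by omega) hcA
    have := hvu c₁ d
    obtain ⟨k, hk⟩ := card_pos.1 (show 0 < #(dotsIn v c₁ c d B) by omega)
    simp only [dotsIn, mem_filter, mem_univ, true_and] at hk
    have := himax k (hmemS k hk.1 (by omega) hk.2.2.2)
    omega

theorem exists_permLE_mul_swap_of_rkN_lt (hvu : permLE v u) {a : Fin n}
    (h : rkN u a (v a) < rkN v a (v a)) :
    ∃ i, i < a ∧ v i < v a ∧ dotsIn v (i + 1) a (v i + 1) (v a) = ∅ ∧
      permLE (v * swap i a) u := by
  obtain ⟨i, hia, hvi, hgap, hrect⟩ := exists_dot_rkN_lt_of_rkN_lt hvu h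
  refine ⟨i, hia, hvi, hgap, fun c d => ?_⟩
  have hswap := rkN_mul_swap_add v (i := i) (j := a) hia hvi c d
  have := hvu c d
  split_ifs at hswap with hcd
  · have := hrect c d hcd.1 hcd.2.1 hcd.2.2.1 hcd.2.2.2
    omega
  · omega

theorem exists_cover_of_rkN_pos {a : Fin n} (h : 0 < rkN v a (v a)) :
    ∃ i, i < a ∧ v i < v a ∧ dotsIn v (i + 1) a (v i + 1) (v a) = ∅ := by
  obtain ⟨k, hk⟩ := card_pos.1 h
  have hk' : k < a ∧ v k < v a := by simpa using hk
  obtain ⟨i, hia, hvi, hgap, -⟩ := exists_permLE_mul_swap_of_rkN_lt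
    (permLE_mul_swap v hk'.1 hk'.2) (rkN_mul_swap_lt v hk'.1 hk'.2)
  exact ⟨i, hia, hvi, hgap⟩

theorem eq_of_permLE_mul_swap {i j a : Fin n} (hia : i < a) (hvi : v i < v a)
    (hgap : dotsIn v (i + 1) a (v i + 1) (v a) = ∅) (hja : j < a) (hvj : v j < v a)
    (hle : permLE (v * swap j a) (v * swap i a)) : i = j := by
  -- compare the two rank functions just southeast of the dot `(j, v j)`
  have hi := rkN_mul_swap_add v hia hvi (j + 1) (v j + 1)
  have hj := rkN_mul_swap_add v hja hvj (j + 1) (v j + 1)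
  rw [if_pos ⟨by omega, by omega, by omega, by omega⟩] at hj
  have := hle (j + 1) (v j + 1)
  split_ifs at hi with hcell
  · by_contra hij
    have := v.injective.ne hij
    have hj_mem : j ∈ dotsIn v (i + 1) a (v i + 1) (v a) := by
      simp only [dotsIn, mem_filter, mem_univ, true_and]
      omega
    simp [hgap] at hj_mem
  · omega

theorem setOf_minimal_permLE_rkN_lt (v : Equiv.Perm (Fin n)) (a : Fin n) :
    {u | (permLE v u ∧ rkN u a (v a) < rkN v a (v a)) ∧
        ∀ u', (permLE v u' ∧ rkN u' a (v a) < rkN v a (v a)) → permLE u' u → u' = u} =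
      {u | ∃ i, i < a ∧ v i < v a ∧ dotsIn v (i + 1) a (v i + 1) (v a) = ∅ ∧
        u = v * swap i a} := by
  have hmem (i : Fin n) (hia : i < a) (hvi : v i < v a) :
      permLE v (v * swap i a) ∧ rkN (v * swap i a) a (v a) < rkN v a (v a) :=
    ⟨permLE_mul_swap v hia hvi, rkN_mul_swap_lt v hia hvi⟩
  ext u
  constructor
  · rintro ⟨⟨hvu, hlt⟩, hmin⟩
    obtain ⟨i, hia, hvi, hgap, hle⟩ := exists_permLE_mul_swap_of_rkN_lt hvu hlt
    exact ⟨i, hia, hvi, hgap, (hmin _ (hmem i hia hvi) hle).symm⟩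
  · rintro ⟨i, hia, hvi, hgap, rfl⟩
    refine ⟨hmem i hia hvi, fun u' ⟨hvu', hlt'⟩ hle => ?_⟩
    obtain ⟨j, hja, hvj, -, hle'⟩ := exists_permLE_mul_swap_of_rkN_lt hvu' hlt'
    obtain rfl := eq_of_permLE_mul_swap hia hvi hgap hja hvj (hle'.trans hle)
    exact permLE_antisymm hle hle'

theorem permLE_mul_swap_ne_len_iff {i a : Fin n} (hia : i < a) :
    (permLE v (v * swap i a) ∧ v * swap i a ≠ v ∧ len (v * swap i a) = len v + 1) ↔
      v i < v a ∧ dotsIn v (i + 1) a (v i + 1) (v a) = ∅ := by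
  constructor
  · rintro ⟨hle, hne, hlen⟩
    have hvi : v i < v a := by
      refine (lt_or_gt_of_ne (v.injective.ne hia.ne)).resolve_right fun hva => hne ?_
      -- otherwise `v` is itself obtained from `v * swap i a` by an upward transposition
      have hge := permLE_mul_swap (v * swap i a) hia (by simpa using hva)
      rw [Equiv.mul_swap_mul_self] at hge
      exact (permLE_antisymm hle hge).symm
    rw [len_mul_swap v hia hvi] at hlen
    exact ⟨hvi, card_eq_zero.1 (by omega)⟩
  · rintro ⟨hvi, hgap⟩
    refine ⟨permLE_mul_swap v hia hvi, ?_, by rw [len_mul_swap v hia hvi, hgap, card_empty]⟩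
    rw [Ne, mul_eq_left, Equiv.swap_eq_one_iff]
    exact hia.ne

end Covers

section Corner

variable {n : ℕ} {w : Equiv.Perm (Fin n)} {a b : Fin n}

theorem rkN_succ_succ_eq_rkN_mul_swap (hab : (a, b) ∈ Dset w) :
    rkN w (a + 1) (b + 1) = rkN (w * swap a (w⁻¹ b)) a b := by
  have hba : b < w a := hab.1
  have hac : a < w⁻¹ b := hab.2
  have hswap := rkN_mul_swap_add (w * swap a (w⁻¹ b)) hac (by simpa using hba) a b
  rw [Equiv.mul_swap_mul_self, if_neg (by omega), add_zero] at hswap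
  rw [rkN_succ_left_of_le w a (by omega), rkN_succ_right_of_le w b (by omega), hswap]

theorem len_eq_len_mul_swap_add_one (hloc : IsLOC w (a, b)) :
    len w = len (w * swap a (w⁻¹ b)) + 1 := by
  obtain ⟨⟨hba, hac⟩, hmax⟩ := hloc
  change b < w a at hba
  change a < w⁻¹ b at hac
  set c := w⁻¹ b
  set v := w * swap a c
  have hva : v a = b := by simp [v, c]
  have hvc : v c = w a := by simp [v]
  have hlen := len_mul_swap v hac (by rw [hva, hvc]; exact hba)
  rw [Equiv.mul_swap_mul_self] at hlen
  -- a dot of `v` between rows `a` and `c` above `b` would put `(k, b)` in `D(w)`,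
  -- southeast of `(a, b)`
  suffices dotsIn v (a + 1) c (v a + 1) (v c) = ∅ by rw [hlen, this, card_empty]
  refine eq_empty_of_forall_notMem fun k hk => ?_
  simp only [dotsIn, mem_filter, mem_univ, true_and] at hk
  have hvk : v k = w k := by
    simp [v, Equiv.swap_apply_of_ne_of_ne (show k ≠ a by omega) (show k ≠ c by omega)]
  have hkD : (k, b) ∈ Dset w := ⟨show b < w k by omega, show k < c by omega⟩
  have := hmax (k, b) hkD (show a ≤ k by omega) le_rfl
  simp only [Prod.mk.injEq, and_true] at this
  omega

end Corner

/-- Cells are 0-indexed: the cell `(a,b)` here is the paper's `(a+1,b+1)`. -/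
theorem stmt_14_general (n : ℕ) (w : Equiv.Perm (Fin n)) (a b : Fin n)
    (hloc : IsLOC w (a, b))
    (π : Equiv.Perm (Fin n))
    (hEss : EssSet π =
      {p : Fin n × Fin n | (p.1 : ℕ) + 1 = (a : ℕ) ∧ (p.2 : ℕ) + 1 = (b : ℕ)})
    (hπrk : rkN π (a : ℕ) (b : ℕ) + 1 = rkN w ((a : ℕ) + 1) ((b : ℕ) + 1)) :
    PermOfJoin (w * Equiv.swap a (w⁻¹ b)) π =
      {u | ∃ i : Fin n, i < a ∧
        u = (w * Equiv.swap a (w⁻¹ b)) * Equiv.swap i a ∧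
        permLE (w * Equiv.swap a (w⁻¹ b)) u ∧ u ≠ w * Equiv.swap a (w⁻¹ b) ∧
        len u = len w} ∧
    sInf (len '' PermOfJoin (w * Equiv.swap a (w⁻¹ b)) π) = len w := by
  have hπv := hπrk.trans (rkN_succ_succ_eq_rkN_mul_swap hloc.1)
  have hlen := len_eq_len_mul_swap_add_one hloc
  set v := w * Equiv.swap a (w⁻¹ b)
  have hva : v a = b := by simp [v]
  have hPerm : PermOfJoin v π = {u | ∃ i, i < a ∧ v i < v a ∧
      dotsIn v (i + 1) a (v i + 1) (v a) = ∅ ∧ u = v * swap i a} := by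
    have habove (u : Equiv.Perm (Fin n)) :
        aboveJoin v π u ↔ permLE v u ∧ rkN u a (v a) < rkN v a (v a) := by
      rw [aboveJoin, permLE_iff_of_essSet_eq hEss, hva]
      exact and_congr_right fun _ => by omega
    simp only [PermOfJoin, habove]
    exact setOf_minimal_permLE_rkN_lt v a
  have hΦ : PermOfJoin v π = {u | ∃ i : Fin n, i < a ∧ u = v * swap i a ∧
      permLE v u ∧ u ≠ v ∧ len u = len w} := by
    rw [hPerm, hlen]
    ext u
    constructor
    · rintro ⟨i, hia, hvi, hgap, rfl⟩
      exact ⟨i, hia, rfl, (permLE_mul_swap_ne_len_iff hia).2 ⟨hvi, hgap⟩⟩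
    · rintro ⟨i, hia, rfl, hcover⟩
      obtain ⟨hvi, hgap⟩ := (permLE_mul_swap_ne_len_iff hia).1 hcover
      exact ⟨i, hia, hvi, hgap, rfl⟩
  refine ⟨hΦ, ?_⟩
  have hne : (PermOfJoin v π).Nonempty := by
    obtain ⟨i, hia, hvi, hgap⟩ := exists_cover_of_rkN_pos (v := v) (a := a) (by rw [hva]; omega)
    rw [hPerm]
    exact ⟨_, i, hia, hvi, hgap, rfl⟩
  have himage : len '' PermOfJoin v π = {len w} := by
    refine (hne.image len).subset_singleton_iff.1 ?_
    rintro _ ⟨u, hu, rfl⟩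
    obtain ⟨-, -, -, -, -, hu⟩ := hΦ ▸ hu
    exact hu
  rw [himage, csInf_singleton]

/-- Let `(a,b)` be a lower outside corner of `D(w)` with `rk_w(a,b) ≥ 1`,
`v = w·t_{a,w⁻¹(b)}`, and `π` the bigrassmannian with `Ess(π) = {(a−1,b−1)}` and
`rk_π(a−1,b−1) = rk_w(a,b) − 1`.  Then `Perm(v ∨ π) = Φ(w,(a,b))` and
`deg(v ∨ π) = min{ℓ(u) : u ∈ Perm(v∨π)} = ℓ(w)`.
(Cells are 0-indexed: the cell `(a,b)` here is the paper's `(a+1,b+1)`.) -/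
theorem stmt_14 (n : ℕ) (w : Equiv.Perm (Fin n)) (a b : Fin n)
    (hloc : IsLOC w (a, b)) (hrk : 1 ≤ rkN w ((a : ℕ) + 1) ((b : ℕ) + 1))
    (π : Equiv.Perm (Fin n))
    (hEss : EssSet π =
      {p : Fin n × Fin n | (p.1 : ℕ) + 1 = (a : ℕ) ∧ (p.2 : ℕ) + 1 = (b : ℕ)})
    (hπrk : rkN π (a : ℕ) (b : ℕ) + 1 = rkN w ((a : ℕ) + 1) ((b : ℕ) + 1)) :
    PermOfJoin (w * Equiv.swap a (w⁻¹ b)) π =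
      {u | ∃ i : Fin n, i < a ∧
        u = (w * Equiv.swap a (w⁻¹ b)) * Equiv.swap i a ∧
        permLE (w * Equiv.swap a (w⁻¹ b)) u ∧ u ≠ w * Equiv.swap a (w⁻¹ b) ∧
        len u = len w} ∧
    sInf (len '' PermOfJoin (w * Equiv.swap a (w⁻¹ b)) π) = len w :=
  stmt_14_general n w a b hloc π hEss hπrk
end

section
/- Let v ∈ S_n and a ∈ [n], and suppose ṽ = v·t_{i,j} with i < j, v(i) < v(j), is a Bruhat cover of v (no k with i < k < j and v(i) < v(k) < v(j)). Suppose further that rk_ṽ(a−1, v(a)−1) ≤ rk_v(a−1, v(a)−1) − 1, where b = v(a). Then j = a, i ≤ a−1, and v(i) ≤ b−1. -/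
namespace Equiv

theorem swap_apply_lt_iff {n c : ℕ} {i j : Fin n} (h : (i : ℕ) < c ↔ (j : ℕ) < c) (k : Fin n) :
    (swap i j k : ℕ) < c ↔ (k : ℕ) < c := by
  rw [swap_apply_def]
  split_ifs with hki hkj
  · rw [hki, h]
  · rw [hkj, h]
  · rfl

end Equiv

section rkN

variable {n : ℕ} (u σ : Equiv.Perm (Fin n)) {c d : ℕ}

theorem rkN_mul_of_lt_iff (hσ : ∀ k : Fin n, (σ k : ℕ) < c ↔ (k : ℕ) < c) :
    rkN (u * σ) c d = rkN u c d :=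
  Finset.card_equiv σ fun k => by rw [Finset.mem_filter]; simp [hσ]

theorem rkN_mul_left_of_lt_iff (hσ : ∀ k : Fin n, (σ k : ℕ) < d ↔ (k : ℕ) < d) :
    rkN (σ * u) c d = rkN u c d := by
  simp only [rkN, Equiv.Perm.mul_apply, hσ]

variable {i j : Fin n}

theorem rkN_mul_swap_of_lt_iff (h : (i : ℕ) < c ↔ (j : ℕ) < c) :
    rkN (u * Equiv.swap i j) c d = rkN u c d :=
  rkN_mul_of_lt_iff u _ (Equiv.swap_apply_lt_iff h)

theorem rkN_mul_swap_of_apply_lt_iff (h : (u i : ℕ) < d ↔ (u j : ℕ) < d) :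
    rkN (u * Equiv.swap i j) c d = rkN u c d := by
  rw [Equiv.mul_swap_eq_swap_mul]
  exact rkN_mul_left_of_lt_iff u _ (Equiv.swap_apply_lt_iff h)

end rkN

/-- Suppose `ṽ = v·t_{i,j}` with `i < j`, `v(i) < v(j)` is a Bruhat cover of `v`
(no `k` with `i < k < j` and `v(i) < v(k) < v(j)`), and suppose
`rk_ṽ(a−1, b−1) ≤ rk_v(a−1, b−1) − 1` where `b = v(a)` (with 0-indexed `a,b`,
`rk` at `(a−1,b−1)` is `rkN` at the natural numbers `(a, v(a))`).
Then `j = a`, `i ≤ a−1`, and `v(i) ≤ b−1`. -/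
theorem stmt_15 (n : ℕ) (v : Equiv.Perm (Fin n)) (a i j : Fin n)
    (hij : i < j) (hv : v i < v j)
    (hcov : ∀ k : Fin n, i < k → k < j → ¬(v i < v k ∧ v k < v j))
    (hrk : rkN (v * Equiv.swap i j) (a : ℕ) (v a : ℕ) + 1 ≤ rkN v (a : ℕ) (v a : ℕ)) :
    j = a ∧ i < a ∧ v i < v a := by
  have hpos : ¬((i : ℕ) < a ↔ (j : ℕ) < a) := fun h => by
    rw [rkN_mul_swap_of_lt_iff v h] at hrk; omega
  have hval : ¬((v i : ℕ) < v a ↔ (v j : ℕ) < v a) := fun h => by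
    rw [rkN_mul_swap_of_apply_lt_iff v h] at hrk; omega
  have hia : i < a := by omega
  have hvia : v i < v a := by omega
  refine ⟨?_, hia, hvia⟩
  by_contra hja
  have hvja : v j ≠ v a := v.injective.ne hja
  exact hcov a hia (by omega) ⟨hvia, by omega⟩
end
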